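/- arXiv:2505.14957 — 9 statements merged into one kernel-verified Lean document; each statement's English description precedes it below -/
import Mathlib

section
/- For every subset S of {1,...,n} of size k (1 ≤ k ≤ n), one has tr((A_S A_Sᵀ + λ I_d)⁻¹) = tr((C_{S,S})⁻¹) + (d−k)/λ, where A_S is the d×k submatrix of A formed by the columns indexed by S and C_{S,S} is the k×k principal submatrix of C indexed by S. Consequently z_k = min_{|S|=k} tr((C_{S,S})⁻¹) + (d−k)/λ. -/
open Matrix Finset

noncomputable section


/-- The information matrix `∑_{i ∈ S} a_i a_iᵀ + λ I_d`. -/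
def infoM (d n : ℕ) (a : Fin n → Fin d → ℝ) (lam : ℝ) (S : Finset (Fin n)) :
    Matrix (Fin d) (Fin d) ℝ :=
  (∑ i ∈ S, Matrix.vecMulVec (a i) (a i)) + lam • (1 : Matrix (Fin d) (Fin d) ℝ)

/-- `f(S) = tr((∑_{i∈S} a_i a_iᵀ + λ I_d)⁻¹)`. -/
def fS (d n : ℕ) (a : Fin n → Fin d → ℝ) (lam : ℝ) (S : Finset (Fin n)) : ℝ :=
  Matrix.trace (infoM d n a lam S)⁻¹

/-- `z_k = min_{|S| = k} f(S)`. -/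
def zk (d n : ℕ) (a : Fin n → Fin d → ℝ) (lam : ℝ) (k : ℕ) : ℝ :=
  sInf {r : ℝ | ∃ S : Finset (Fin n), S.card = k ∧ fS d n a lam S = r}

/-- The `d × n` matrix whose `i`-th column is `a_i`. -/
def Amat (d n : ℕ) (a : Fin n → Fin d → ℝ) : Matrix (Fin d) (Fin n) ℝ :=
  Matrix.of fun i j => a j i

/-- `C = AᵀA + λ I_n`. -/
def Cmat (d n : ℕ) (a : Fin n → Fin d → ℝ) (lam : ℝ) : Matrix (Fin n) (Fin n) ℝ :=
  (Amat d n a)ᵀ * Amat d n a + lam • (1 : Matrix (Fin n) (Fin n) ℝ)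

/-- The principal submatrix `C_{S,S}`. -/
def Csub (d n : ℕ) (a : Fin n → Fin d → ℝ) (lam : ℝ) (S : Finset (Fin n)) :
    Matrix {x : Fin n // x ∈ S} {x : Fin n // x ∈ S} ℝ :=
  (Cmat d n a lam).submatrix (fun i => i.1) (fun i => i.1)

end

/-!
For `M = BC + cI` and `N = CB + cI`, the push-through identity `M⁻¹ B = B N⁻¹` gives
`c M⁻¹ = I - M⁻¹ BC = I - B N⁻¹ C`, while `c N⁻¹ = I - N⁻¹ CB`. Taking traces, both
`c tr M⁻¹ - card m` and `c tr N⁻¹ - card n` equal `-tr(N⁻¹ CB)`, so the two traces differ by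
`(card m - card n) / c`. With `B = A_S` and `C = A_Sᵀ` this is the identity for `f(S)`, and the
formula for `z_k` follows because the shift by `(d - k)/λ` does not depend on `S`.
-/

namespace Matrix

theorem isUnit_mul_transpose_add_smul_one {m n : Type*} [Fintype m] [Fintype n] [DecidableEq m]
    (B : Matrix m n ℝ) {c : ℝ} (hc : 0 < c) :
    IsUnit (B * Bᵀ + c • 1) := by
  have hBBt : (B * Bᵀ).PosSemidef := by
    simpa only [conjTranspose_eq_transpose_of_trivial] using posSemidef_self_mul_conjTranspose B
  exact (PosDef.posSemidef_add hBBt (PosDef.one.smul hc)).isUnit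

section

variable {K : Type*} [Field K] {m n : Type*} [Fintype m] [Fintype n] [DecidableEq m]
  [DecidableEq n]

theorem smul_inv_add_smul_one {X : Matrix n n K} {c : K} (h : IsUnit (X + c • 1)) :
    c • (X + c • 1)⁻¹ = 1 - (X + c • 1)⁻¹ * X := by
  have hinv := nonsing_inv_mul _ ((isUnit_iff_isUnit_det _).mp h)
  rw [Matrix.mul_add, Matrix.mul_smul, Matrix.mul_one] at hinv
  exact eq_sub_of_add_eq' hinv

theorem inv_add_smul_one_mul_push_through {B : Matrix m n K} {C : Matrix n m K} {c : K}
    (hM : IsUnit (B * C + c • 1)) (hN : IsUnit (C * B + c • 1)) :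
    (B * C + c • 1)⁻¹ * B = B * (C * B + c • 1)⁻¹ := by
  have hMB : (B * C + c • 1) * B = B * (C * B + c • 1) := by
    simp only [Matrix.add_mul, Matrix.mul_add, Matrix.mul_assoc, Matrix.smul_mul, Matrix.mul_smul,
      Matrix.one_mul, Matrix.mul_one]
  let _ := hM.invertible
  let _ := hN.invertible
  rw [inv_mul_eq_iff_eq_mul_of_invertible, ← Matrix.mul_assoc, hMB, Matrix.mul_assoc,
    mul_inv_of_invertible, Matrix.mul_one]

theorem trace_inv_mul_add_smul_one {B : Matrix m n K} {C : Matrix n m K} {c : K} (hc : c ≠ 0)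
    (hM : IsUnit (B * C + c • 1)) (hN : IsUnit (C * B + c • 1)) :
    trace (B * C + c • 1)⁻¹ =
      trace (C * B + c • 1)⁻¹ + (Fintype.card m - Fintype.card n) / c := by
  have htM := congrArg trace (smul_inv_add_smul_one hM)
  have htN := congrArg trace (smul_inv_add_smul_one hN)
  rw [← Matrix.mul_assoc, inv_add_smul_one_mul_push_through hM hN, Matrix.mul_assoc] at htM
  simp only [trace_smul, trace_sub, trace_one, smul_eq_mul] at htM htN
  rw [trace_mul_comm B, Matrix.mul_assoc] at htM
  field_simp
  linear_combination htM - htN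

end

end Matrix

open scoped Pointwise

section Design

variable {d n : ℕ} (a : Fin n → Fin d → ℝ) (lam : ℝ) (S : Finset (Fin n))

theorem infoM_eq_mul_transpose_add_smul_one :
    infoM d n a lam S =
      (Amat d n a).submatrix id ((↑) : S → Fin n) *
        ((Amat d n a).submatrix id ((↑) : S → Fin n))ᵀ + lam • 1 := by
  rw [infoM]
  congr 1
  ext p q
  simp only [Matrix.sum_apply, Matrix.vecMulVec_apply, Matrix.mul_apply, Matrix.transpose_apply,
    Matrix.submatrix_apply, Amat, Matrix.of_apply, id]
  exact (Finset.sum_coe_sort S fun i => a i p * a i q).symm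

theorem Csub_eq_transpose_mul_add_smul_one :
    Csub d n a lam S =
      ((Amat d n a).submatrix id ((↑) : S → Fin n))ᵀ *
        (Amat d n a).submatrix id ((↑) : S → Fin n) + lam • 1 := by
  rw [Csub, Cmat, Matrix.submatrix_add, Pi.add_apply, Pi.add_apply, Matrix.submatrix_smul,
    Pi.smul_apply, Pi.smul_apply, Matrix.submatrix_one _ Subtype.val_injective,
    Matrix.submatrix_mul _ _ _ id _ Function.bijective_id, Matrix.transpose_submatrix]

theorem fS_eq_trace_inv_Csub_add {lam : ℝ} (hlam : 0 < lam) :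
    fS d n a lam S = trace (Csub d n a lam S)⁻¹ + ((d : ℝ) - S.card) / lam := by
  set B := (Amat d n a).submatrix id ((↑) : S → Fin n)
  have hN : IsUnit (Bᵀ * B + lam • 1) := by
    simpa using Matrix.isUnit_mul_transpose_add_smul_one Bᵀ hlam
  rw [fS, infoM_eq_mul_transpose_add_smul_one, Csub_eq_transpose_mul_add_smul_one,
    Matrix.trace_inv_mul_add_smul_one hlam.ne' (Matrix.isUnit_mul_transpose_add_smul_one B hlam)
      hN, Fintype.card_fin, Fintype.card_coe]

end Design

theorem stmt0_general (d n : ℕ)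
    (a : Fin n → Fin d → ℝ) (lam : ℝ) (hlam : 0 < lam)
    (k : ℕ) (hkn : k ≤ n) :
    (∀ S : Finset (Fin n), S.card = k →
      fS d n a lam S = Matrix.trace (Csub d n a lam S)⁻¹ + ((d : ℝ) - k) / lam) ∧
    zk d n a lam k =
      sInf {r : ℝ | ∃ S : Finset (Fin n), S.card = k ∧
        Matrix.trace (Csub d n a lam S)⁻¹ = r} + ((d : ℝ) - k) / lam := by
  have hf : ∀ S : Finset (Fin n), S.card = k →
      fS d n a lam S = trace (Csub d n a lam S)⁻¹ + ((d : ℝ) - k) / lam := fun S hS => by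
    rw [fS_eq_trace_inv_Csub_add a S hlam, hS]
  refine ⟨hf, ?_⟩
  set cardK : Set (Finset (Fin n)) := {S | S.card = k}
  have hshift : fS d n a lam '' cardK =
      (fun S => trace (Csub d n a lam S)⁻¹) '' cardK + ({((d : ℝ) - k) / lam} : Set ℝ) := by
    rw [Set.add_singleton, Set.image_image]
    exact Set.image_congr hf
  obtain ⟨S, -, hS⟩ := Finset.exists_subset_card_eq
    (show k ≤ (Finset.univ : Finset (Fin n)).card by rwa [Finset.card_fin])
  have hne : cardK.Nonempty := ⟨S, hS⟩
  show sInf (fS d n a lam '' cardK) = sInf (_ '' cardK) + _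
  rw [hshift, csInf_add (hne.image _) ((Set.toFinite cardK).image _).bddBelow
    (Set.singleton_nonempty _) bddBelow_singleton, csInf_singleton]

theorem stmt0 (d n : ℕ) (hd : 1 ≤ d) (hdn : d ≤ n)
    (a : Fin n → Fin d → ℝ) (lam : ℝ) (hlam : 0 < lam)
    (k : ℕ) (hk1 : 1 ≤ k) (hkn : k ≤ n) :
    (∀ S : Finset (Fin n), S.card = k →
      fS d n a lam S = Matrix.trace (Csub d n a lam S)⁻¹ + ((d : ℝ) - k) / lam) ∧
    zk d n a lam k =
      sInf {r : ℝ | ∃ S : Finset (Fin n), S.card = k ∧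
        Matrix.trace (Csub d n a lam S)⁻¹ = r} + ((d : ℝ) - k) / lam :=
  stmt0_general d n a lam hlam k hkn
end

section
/- If S is a subset of vertices of size k that is NOT an independent set of G (i.e., S contains both endpoints of at least one edge), then the principal submatrix C_{S,S} is positive definite and tr((C_{S,S})⁻¹) > k/n. -/
open Matrix Finset
open scoped ComplexOrder

/-!
Restricted to `S`, the matrix is `M = n • 1 + A` with `A` the adjacency matrix of the induced
graph. Every vertex of that graph has degree `< k ≤ n`, so `M` is strictly diagonally dominant
and hence positive definite (Gershgorin). Taking traces in `n M⁻¹ + M⁻¹ A = 1` and in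
`n M⁻¹ A = A - M⁻¹ A²`, where `tr A = 0`, gives `n · tr M⁻¹ = k + tr (A M⁻¹ A) / n`; and
`tr (A M⁻¹ A) > 0` because `M⁻¹` is positive definite and `A ≠ 0` as `S` spans an edge.
-/

namespace Matrix

variable {ι : Type*} [Fintype ι] [DecidableEq ι]

theorem posDef_of_sum_norm_offDiag_lt_diag {M : Matrix ι ι ℝ} (hM : M.IsHermitian)
    (h : ∀ i, ∑ j ∈ univ.erase i, ‖M i j‖ < M i i) : M.PosDef := by
  refine hM.posDef_iff_eigenvalues_pos.mpr fun i => ?_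
  have hμ : Module.End.HasEigenvalue (toLin' M) (hM.eigenvalues i) :=
    .of_mem_spectrum (by rw [spectrum_toLin']; exact hM.eigenvalues_mem_spectrum_real i)
  obtain ⟨j, hj⟩ := eigenvalue_mem_ball hμ
  rw [Metric.mem_closedBall, Real.dist_eq] at hj
  linarith [h j, neg_abs_le (hM.eigenvalues i - M j j)]

theorem trace_inv_smul_one_add {K : Type*} [Field K] {c : K} (hc : c ≠ 0) {A : Matrix ι ι K}
    (hA : A.trace = 0) (hM : IsUnit (c • (1 : Matrix ι ι K) + A).det) :
    c * trace (c • 1 + A)⁻¹ = Fintype.card ι + c⁻¹ * trace (A * (c • 1 + A)⁻¹ * A) := by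
  set M := c • (1 : Matrix ι ι K) + A
  have hleft : c • M⁻¹ + M⁻¹ * A = 1 := by
    rw [← nonsing_inv_mul M hM, mul_add, Matrix.mul_smul, mul_one]
  have hleftA : c • (M⁻¹ * A) = A - M⁻¹ * A * A := by
    rw [← smul_mul_assoc, eq_sub_of_add_eq hleft, sub_mul, one_mul]
  have htrInvA : c * trace (M⁻¹ * A) = -trace (A * M⁻¹ * A) := by
    rw [← smul_eq_mul, ← trace_smul, hleftA, trace_sub, hA, trace_mul_cycle, zero_sub]
  have htrLeft : c * trace M⁻¹ + trace (M⁻¹ * A) = Fintype.card ι := by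
    simpa [trace_add, trace_smul] using congrArg trace hleft
  field_simp
  linear_combination c * htrLeft - htrInvA

omit [DecidableEq ι] in
theorem PosDef.trace_conjTranspose_mul_mul_same_pos {m 𝕜 : Type*} [Fintype m] [RCLike 𝕜]
    {P : Matrix m m 𝕜} (hP : P.PosDef) {B : Matrix m ι 𝕜} (hB : B ≠ 0) :
    0 < trace (Bᴴ * P * B) := by
  have hX := hP.posSemidef.conjTranspose_mul_mul_same B
  refine lt_of_le_of_ne hX.trace_nonneg fun h => ?_
  obtain ⟨j, hj⟩ : ∃ j, Bᵀ j ≠ 0 := by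
    by_contra! h
    exact hB (transpose_eq_zero.mp (funext h))
  have hdiag : (Bᴴ * P * B) j j = star (Bᵀ j) ⬝ᵥ P *ᵥ Bᵀ j := by
    rw [Matrix.mul_assoc, mul_apply, dotProduct]
    simp [mul_apply, mulVec, dotProduct]
  have := hP.dotProduct_mulVec_pos hj
  rw [← hdiag, hX.trace_eq_zero_iff.mp h.symm] at this
  exact this.ne rfl

theorem card_div_lt_trace_inv_smul_one_add {c : ℝ} (hc : 0 < c) {A : Matrix ι ι ℝ}
    (hA : A.IsHermitian) (htr : A.trace = 0) (hA0 : A ≠ 0) (hM : (c • 1 + A).PosDef) :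
    Fintype.card ι / c < trace (c • 1 + A)⁻¹ := by
  have key := trace_inv_smul_one_add hc.ne' htr (isUnit_iff_ne_zero.mpr hM.det_pos.ne')
  have hpos : 0 < trace (A * (c • 1 + A)⁻¹ * A) := by
    simpa only [hA.eq] using hM.inv.trace_conjTranspose_mul_mul_same_pos hA0
  rw [div_lt_iff₀' hc, key]
  linarith [mul_pos (inv_pos.mpr hc) hpos]

end Matrix

namespace SimpleGraph

variable {V : Type*} [Fintype V] [DecidableEq V] (H : SimpleGraph V) [DecidableRel H.Adj]

theorem sum_erase_norm_adjMatrix_apply (v : V) :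
    ∑ w ∈ univ.erase v, ‖H.adjMatrix ℝ v w‖ = H.degree v := by
  rw [sum_erase _ (by simp)]
  simp [apply_ite, ← H.card_neighborFinset_eq_degree, neighborFinset_eq_filter]

theorem posDef_smul_one_add_adjMatrix {c : ℝ} (hc : ∀ v, (H.degree v : ℝ) < c) :
    (c • 1 + H.adjMatrix ℝ).PosDef := by
  have hA : (H.adjMatrix ℝ).IsHermitian := H.isSymm_adjMatrix
  refine posDef_of_sum_norm_offDiag_lt_diag ((isHermitian_one.smul (.all c)).add hA) fun v => ?_
  have hoff : ∀ w ∈ univ.erase v, (c • 1 + H.adjMatrix ℝ) v w = H.adjMatrix ℝ v w := by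
    intro w hw
    simp [one_apply_ne' (ne_of_mem_erase hw)]
  rw [sum_congr rfl fun w hw => congrArg norm (hoff w hw), sum_erase_norm_adjMatrix_apply]
  simpa using hc v

end SimpleGraph

theorem stmt2_general (n : ℕ) (G : SimpleGraph (Fin n)) [DecidableRel G.Adj]
    (k : ℕ)
    (C : Matrix (Fin n) (Fin n) ℝ)
    (hC : ∀ i j, C i j = if i = j then (n : ℝ) else if G.Adj i j then 1 else 0)
    (S : Finset (Fin n)) (hS : S.card = k)
    (hnotind : ∃ i ∈ S, ∃ j ∈ S, G.Adj i j) :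
    (C.submatrix (fun i : {x : Fin n // x ∈ S} => i.1)
        (fun i : {x : Fin n // x ∈ S} => i.1)).PosDef ∧
    (k : ℝ) / n < Matrix.trace ((C.submatrix (fun i : {x : Fin n // x ∈ S} => i.1)
        (fun i : {x : Fin n // x ∈ S} => i.1))⁻¹) := by
  obtain ⟨i, hi, j, hj, hij⟩ := hnotind
  set H : SimpleGraph {x : Fin n // x ∈ S} := G.comap Subtype.val
  have hM : C.submatrix (fun i : {x : Fin n // x ∈ S} => i.1) (fun i => i.1) =
      (n : ℝ) • 1 + H.adjMatrix ℝ := by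
    ext u w
    by_cases h : u = w
    · subst h; simp [hC]
    · simp [H, hC, h, Subtype.val_injective.ne h]
  have hdeg (v) : (H.degree v : ℝ) < n := by
    exact_mod_cast (H.degree_lt_card_verts v).trans_le (by simpa using S.card_le_univ)
  have hPD := H.posDef_smul_one_add_adjMatrix hdeg
  have hA0 : H.adjMatrix ℝ ≠ 0 := fun h => by
    simpa [H, hij] using congrFun₂ h ⟨i, hi⟩ ⟨j, hj⟩
  have hn : (0 : ℝ) < n := (Nat.cast_nonneg _).trans_lt (hdeg ⟨i, hi⟩)
  rw [hM, ← hS, ← Fintype.card_coe S]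
  exact ⟨hPD, card_div_lt_trace_inv_smul_one_add hn H.isSymm_adjMatrix (H.trace_adjMatrix ℝ)
    hA0 hPD⟩

theorem stmt2 (n : ℕ) (hn : 1 ≤ n) (G : SimpleGraph (Fin n)) [DecidableRel G.Adj]
    (k : ℕ) (hk1 : 1 ≤ k) (hkn : k ≤ n)
    (C : Matrix (Fin n) (Fin n) ℝ)
    (hC : ∀ i j, C i j = if i = j then (n : ℝ) else if G.Adj i j then 1 else 0)
    (S : Finset (Fin n)) (hS : S.card = k)
    (hnotind : ∃ i ∈ S, ∃ j ∈ S, G.Adj i j) :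
    (C.submatrix (fun i : {x : Fin n // x ∈ S} => i.1)
        (fun i : {x : Fin n // x ∈ S} => i.1)).PosDef ∧
    (k : ℝ) / n < Matrix.trace ((C.submatrix (fun i : {x : Fin n // x ∈ S} => i.1)
        (fun i : {x : Fin n // x ∈ S} => i.1))⁻¹) :=
  stmt2_general n G k C hC S hS hnotind
end

section
/- Let S ⊆ {1,...,n} be a nonempty subset of size s ≥ 1 and set ρ = λ/(λ + max{1, s/d}·max_{i∈{1,...,n}} ‖a_i‖₂²). Then: if 1 ≤ s ≤ d−1, min_{i∈S} f(S∖{i}) ≤ (1 + 1/(sρ + d − s))·f(S); and if d ≤ s ≤ n, min_{i∈S} f(S∖{i}) ≤ (1 + 1/(dρ + s − d))·f(S). -/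
open Matrix Finset

/-!
Write `M = ∑_{i ∈ S} a_i a_iᵀ + λ I` and `N = M⁻¹`. By Sherman–Morrison, removing `a_i` raises
`f` by `q_i / (1 - t_i)`, where `t_i = a_iᵀ N a_i < 1` and `q_i = a_iᵀ N² a_i`. Since
`∑ t_i = d - λ tr N` and `∑ q_i = tr N - λ tr N²`, some `i ∈ S` raises `f` by at most
`(tr N - λ tr N²) / (s - d + λ tr N)`. In the eigenvalues `μ_j ≥ 0` of `∑ a_i a_iᵀ`, of which at
most `min s d` are nonzero, this becomes an inequality between `∑ (μ_j + λ)⁻¹` and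
`∑ (μ_j + λ)⁻²`. It follows from AM–HM on `min s d` eigenvalues containing the nonzero ones,
together with the trace bound `∑ μ_j ≤ s · max ‖a_i‖²`.
-/

namespace Matrix

section Rank

variable {m n K : Type*} [Fintype n] [Field K]

theorem rank_add_le (A B : Matrix m n K) : (A + B).rank ≤ A.rank + B.rank := by
  have h : LinearMap.range (A + B).mulVecLin ≤
      LinearMap.range A.mulVecLin ⊔ LinearMap.range B.mulVecLin := by
    rintro _ ⟨x, rfl⟩
    rw [mulVecLin_apply, add_mulVec]
    exact Submodule.add_mem_sup (LinearMap.mem_range_self A.mulVecLin x)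
      (LinearMap.mem_range_self B.mulVecLin x)
  exact (Submodule.finrank_mono h).trans (Submodule.finrank_add_le_finrank_add_finrank _ _)

theorem rank_sum_vecMulVec_le {ι : Type*} (s : Finset ι) (u : ι → m → K) (v : ι → n → K) :
    (∑ i ∈ s, vecMulVec (u i) (v i)).rank ≤ #s := by
  classical
  induction s using Finset.induction_on with
  | empty => simp
  | insert i s hi ih =>
    rw [sum_insert hi, card_insert_of_notMem hi]
    grw [rank_add_le, rank_vecMulVec_le, ih]
    omega

end Rank

section

variable {m : Type*} [Fintype m]

theorem trace_mul_sum_vecMulVec {R ι : Type*} [CommSemiring R] (X : Matrix m m R) (s : Finset ι)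
    (u v : ι → m → R) :
    trace (X * ∑ i ∈ s, vecMulVec (u i) (v i)) = ∑ i ∈ s, v i ⬝ᵥ X *ᵥ u i := by
  simp only [Matrix.mul_sum, trace_sum, mul_vecMulVec, trace_vecMulVec, dotProduct_comm]

theorem trace_conjStarAlgAut [DecidableEq m] {R : Type*} [CommRing R] [StarRing R]
    (U : unitary (Matrix m m R)) (X : Matrix m m R) :
    trace (Unitary.conjStarAlgAut R _ U X) = trace X := by
  rw [Unitary.conjStarAlgAut_apply, trace_mul_cycle, Unitary.coe_star_mul_self, one_mul]

theorem posSemidef_vecMulVec_self (u : m → ℝ) : (vecMulVec u u).PosSemidef := by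
  simpa using posSemidef_vecMulVec_self_star u

theorem PosDef.add_vecMulVec_self {M : Matrix m m ℝ} (hM : M.PosDef) (b : m → ℝ) :
    (M + vecMulVec b b).PosDef :=
  hM.add_posSemidef (posSemidef_vecMulVec_self b)

end

variable {m K : Type*} [Fintype m] [DecidableEq m] [Field K]

theorem det_sub_vecMulVec {M : Matrix m m K} (hM : IsUnit M.det) (u v : m → K) :
    (M - vecMulVec u v).det = M.det * (1 - v ⬝ᵥ M⁻¹ *ᵥ u) := by
  have h : M - vecMulVec u v =
      M * (1 + replicateCol Unit (-(M⁻¹ *ᵥ u)) * replicateRow Unit v) := by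
    rw [Matrix.mul_add, mul_one, ← vecMulVec_eq, mul_vecMulVec, mulVec_neg,
      mulVec_mulVec, mul_nonsing_inv _ hM, one_mulVec, neg_vecMulVec, sub_eq_add_neg]
  rw [h, det_mul, det_one_add_replicateCol_mul_replicateRow, dotProduct_neg, sub_eq_add_neg]

theorem inv_sub_vecMulVec {M : Matrix m m K} (hM : IsUnit M.det) (u v : m → K)
    (h : v ⬝ᵥ M⁻¹ *ᵥ u ≠ 1) :
    (M - vecMulVec u v)⁻¹ =
      M⁻¹ + (1 - v ⬝ᵥ M⁻¹ *ᵥ u)⁻¹ • vecMulVec (M⁻¹ *ᵥ u) (v ᵥ* M⁻¹) := by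
  have hcoeff : (1 - v ⬝ᵥ M⁻¹ *ᵥ u)⁻¹ - (1 + (1 - v ⬝ᵥ M⁻¹ *ᵥ u)⁻¹ * v ⬝ᵥ M⁻¹ *ᵥ u) = 0 := by
    field_simp [sub_ne_zero.mpr (Ne.symm h)]
    ring
  apply inv_eq_right_inv
  rw [Matrix.sub_mul, Matrix.mul_add, Matrix.mul_add, mul_nonsing_inv _ hM, Matrix.mul_smul,
    Matrix.mul_smul, mul_vecMulVec, mulVec_mulVec, mul_nonsing_inv _ hM, one_mulVec,
    vecMulVec_mul, vecMulVec_mul_vecMulVec, vecMulVec_smul, smul_smul, add_sub_assoc,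
    add_eq_left, ← zero_smul K (vecMulVec u (v ᵥ* M⁻¹)), ← hcoeff, sub_smul, add_smul, one_smul]

theorem trace_inv_pow_succ_mul_sub_smul_one {M : Matrix m m K} (hM : IsUnit M.det) (c : K)
    (k : ℕ) :
    trace (M⁻¹ ^ (k + 1) * (M - c • 1)) = trace (M⁻¹ ^ k) - c * trace (M⁻¹ ^ (k + 1)) := by
  rw [Matrix.mul_sub, Matrix.mul_smul, Matrix.mul_one, pow_succ, Matrix.mul_assoc,
    nonsing_inv_mul _ hM, Matrix.mul_one, trace_sub, trace_smul, smul_eq_mul]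

theorem IsHermitian.trace_inv_add_smul_one_pow {A : Matrix m m ℝ} (hA : A.IsHermitian) {c : ℝ}
    (hc : ∀ j, hA.eigenvalues j + c ≠ 0) (k : ℕ) :
    trace ((A + c • 1)⁻¹ ^ k) = ∑ j, (hA.eigenvalues j + c)⁻¹ ^ k := by
  set φ := Unitary.conjStarAlgAut ℝ (Matrix m m ℝ) hA.eigenvectorUnitary
  have hshift : A + c • 1 = φ (diagonal fun j => hA.eigenvalues j + c) := by
    conv_lhs => rw [hA.spectral_theorem]
    rw [← map_one φ, ← map_smul, ← map_add, ← diagonal_one, ← diagonal_smul, diagonal_add]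
    congr 2
    funext j
    simp
  have hinv : (A + c • 1)⁻¹ = φ (diagonal fun j => (hA.eigenvalues j + c)⁻¹) := by
    refine inv_eq_right_inv ?_
    rw [hshift, ← map_mul, diagonal_mul_diagonal, ← map_one φ, ← diagonal_one]
    congr 2
    ext j
    exact mul_inv_cancel₀ (hc j)
  rw [hinv, ← map_pow, diagonal_pow, trace_conjStarAlgAut, trace_diagonal]
  simp only [Pi.pow_apply]

namespace PosDef

variable {M : Matrix m m ℝ}

theorem dotProduct_inv_add_vecMulVec_lt_one (hM : M.PosDef) (b : m → ℝ) :
    b ⬝ᵥ (M + vecMulVec b b)⁻¹ *ᵥ b < 1 := by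
  have hP := hM.add_vecMulVec_self b
  have hdet := det_sub_vecMulVec hP.det_pos.ne'.isUnit b b
  rw [add_sub_cancel_right] at hdet
  have h : 0 < 1 - b ⬝ᵥ (M + vecMulVec b b)⁻¹ *ᵥ b :=
    pos_of_mul_pos_right (hdet ▸ hM.det_pos) hP.det_pos.le
  linarith

theorem trace_inv_eq_trace_inv_add_vecMulVec (hM : M.PosDef) (b : m → ℝ) :
    trace M⁻¹ = trace (M + vecMulVec b b)⁻¹ +
      (b ⬝ᵥ (M + vecMulVec b b)⁻¹ ^ 2 *ᵥ b) / (1 - b ⬝ᵥ (M + vecMulVec b b)⁻¹ *ᵥ b) := by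
  have hP := hM.add_vecMulVec_self b
  nth_rw 1 [← add_sub_cancel_right M (vecMulVec b b)]
  rw [inv_sub_vecMulVec hP.det_pos.ne'.isUnit b b (hM.dotProduct_inv_add_vecMulVec_lt_one b).ne,
    trace_add, trace_smul, trace_vecMulVec, dotProduct_comm (_ *ᵥ b) (b ᵥ* _),
    ← dotProduct_mulVec, mulVec_mulVec, sq, smul_eq_mul, div_eq_inv_mul]

end PosDef

end Matrix

namespace Finset

variable {ι R : Type*} [Field R] [LinearOrder R] [IsStrictOrderedRing R]

theorem exists_div_le_sum_div {s : Finset ι} (hs : s.Nonempty) (q : ι → R) {w : ι → R}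
    (hw : ∀ i ∈ s, 0 < w i) : ∃ i ∈ s, q i / w i ≤ (∑ i ∈ s, q i) / ∑ i ∈ s, w i := by
  obtain ⟨i, hi, h⟩ := exists_le_of_sum_le hs (f := fun i => q i * ∑ i ∈ s, w i)
    (g := fun i => (∑ i ∈ s, q i) * w i) (by rw [← sum_mul, ← mul_sum])
  exact ⟨i, hi, (div_le_div_iff₀ (hw i hi) (sum_pos hw hs)).mpr h⟩

theorem card_div_le_sum_inv {s : Finset ι} {ν : ι → R} (hν : ∀ i ∈ s, 0 < ν i) {C : R}
    (hC : 0 < C) (hsum : ∑ i ∈ s, ν i ≤ #s * C) : #s / C ≤ ∑ i ∈ s, (ν i)⁻¹ := by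
  rcases s.eq_empty_or_nonempty with rfl | hs
  · simp
  have hcard : (0 : R) < #s := by exact_mod_cast hs.card_pos
  have hsedrakyan := sq_sum_div_le_sum_sq_div s (fun _ => (1 : R)) hν
  simp only [sum_const, nsmul_eq_mul, mul_one, one_pow, one_div] at hsedrakyan
  calc (#s : R) / C = #s ^ 2 / (#s * C) := by field_simp
    _ ≤ #s ^ 2 / ∑ i ∈ s, ν i := by gcongr; exact sum_pos hν hs
    _ ≤ ∑ i ∈ s, (ν i)⁻¹ := hsedrakyan

theorem sum_le_card_mul_iSup [Finite ι] (s : Finset ι) (f : ι → ℝ) :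
    ∑ i ∈ s, f i ≤ #s * ⨆ i, f i := by
  rw [← nsmul_eq_mul]
  exact sum_le_card_nsmul _ _ _ fun i _ => le_ciSup (Set.finite_range f).bddAbove i

end Finset

section Resolvent

variable {ι : Type*} {μ : ι → ℝ} {lam : ℝ}

theorem card_mul_div_le_mul_sum_inv {J : Finset ι} (hμ : ∀ j ∈ J, 0 ≤ μ j) (hlam : 0 < lam)
    {C : ℝ} (hC : 0 ≤ C) (hsum : ∑ j ∈ J, μ j ≤ #J * C) :
    #J * (lam / (lam + C)) ≤ lam * ∑ j ∈ J, (μ j + lam)⁻¹ := by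
  have hJ := Finset.card_div_le_sum_inv (ν := fun j => μ j + lam)
    (fun j hj => by linarith [hμ j hj]) (by linarith : 0 < lam + C)
    (by rw [Finset.sum_add_distrib, Finset.sum_const, nsmul_eq_mul]; linarith)
  calc (#J : ℝ) * (lam / (lam + C)) = lam * (#J / (lam + C)) := by ring
    _ ≤ lam * ∑ j ∈ J, (μ j + lam)⁻¹ := by gcongr

variable [Fintype ι]

theorem resolvent_sum_ineq (hμ : ∀ j, 0 ≤ μ j) (hlam : 0 < lam) {J : Finset ι}
    (hJ : ∀ j ∉ J, μ j = 0) {ρ : ℝ} (hρ : #J * ρ ≤ lam * ∑ j ∈ J, (μ j + lam)⁻¹) :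
    (#J * ρ + (Fintype.card ι - #J)) *
        (∑ j, (μ j + lam)⁻¹ - lam * ∑ j, (μ j + lam)⁻¹ ^ 2) ≤
      (∑ j, (μ j + lam)⁻¹) * (#J - Fintype.card ι + lam * ∑ j, (μ j + lam)⁻¹) := by
  classical
  have hpos : ∀ j, 0 < μ j + lam := fun j => by linarith [hμ j]
  have hsplit : ∀ k : ℕ, ∑ j, (μ j + lam)⁻¹ ^ k =
      ∑ j ∈ J, (μ j + lam)⁻¹ ^ k + (Fintype.card ι - #J) * lam⁻¹ ^ k := by
    intro k
    rw [← Finset.sum_add_sum_compl J]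
    congr 1
    rw [Finset.sum_congr rfl fun j hj => by rw [hJ j (Finset.mem_compl.mp hj), zero_add],
      Finset.sum_const, Finset.card_compl, nsmul_eq_mul, Nat.cast_sub (Finset.card_le_univ J)]
  have hT := hsplit 1
  have hQ := hsplit 2
  simp only [pow_one] at hT
  set TJ := ∑ j ∈ J, (μ j + lam)⁻¹
  set QJ := ∑ j ∈ J, (μ j + lam)⁻¹ ^ 2
  set e : ℝ := Fintype.card ι - #J
  have he : 0 ≤ e := sub_nonneg.mpr (by exact_mod_cast Finset.card_le_univ J)
  have hQJ : 0 ≤ QJ := Finset.sum_nonneg fun j _ => sq_nonneg _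
  have hTJ : 0 ≤ TJ := Finset.sum_nonneg fun j _ => (inv_pos.mpr (hpos j)).le
  have hX : 0 ≤ TJ - lam * QJ := by
    rw [Finset.mul_sum, ← Finset.sum_sub_distrib]
    refine Finset.sum_nonneg fun j _ => ?_
    have : (μ j + lam)⁻¹ - lam * (μ j + lam)⁻¹ ^ 2 = μ j * (μ j + lam)⁻¹ ^ 2 := by
      field_simp [(hpos j).ne']
      ring
    rw [this]
    exact mul_nonneg (hμ j) (sq_nonneg _)
  have hlhs : TJ + e * lam⁻¹ - lam * (QJ + e * lam⁻¹ ^ 2) = TJ - lam * QJ := by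
    field_simp
    ring
  have hrhs : (TJ + e * lam⁻¹) * (#J - Fintype.card ι + lam * (TJ + e * lam⁻¹)) =
      lam * TJ * TJ + e * TJ := by
    field_simp
    ring
  rw [hT, hQ, hlhs, hrhs, add_mul]
  have hXT : TJ - lam * QJ ≤ TJ := sub_le_self _ (mul_nonneg hlam.le hQJ)
  exact add_le_add (mul_le_mul hρ hXT hX (mul_nonneg hlam.le hTJ))
    (mul_le_mul_of_nonneg_left hXT he)

theorem resolvent_sum_ineq_of_le_card (hμ : ∀ j, 0 ≤ μ j) (hlam : 0 < lam) {s : ℕ}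
    (hs : s ≤ Fintype.card ι) (hsupp : #{j | μ j ≠ 0} ≤ s) {C : ℝ} (hC : 0 ≤ C)
    (hsum : ∑ j, μ j ≤ s * C) :
    (s * (lam / (lam + C)) + Fintype.card ι - s) *
        (∑ j, (μ j + lam)⁻¹ - lam * ∑ j, (μ j + lam)⁻¹ ^ 2) ≤
      (∑ j, (μ j + lam)⁻¹) * (s - Fintype.card ι + lam * ∑ j, (μ j + lam)⁻¹) := by
  classical
  obtain ⟨J, hsuppJ, -, rfl⟩ :=
    Finset.exists_subsuperset_card_eq (Finset.filter_subset _ Finset.univ) hsupp (by simpa)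
  have hJ : ∀ j ∉ J, μ j = 0 := fun j hj => by
    by_contra h
    exact hj (hsuppJ (by simpa using h))
  have hρ := card_mul_div_le_mul_sum_inv (fun j _ => hμ j) hlam hC
    ((Finset.sum_le_univ_sum_of_nonneg hμ).trans hsum)
  rw [add_sub_assoc]
  exact resolvent_sum_ineq hμ hlam hJ hρ

theorem resolvent_sum_ineq_of_card_le (hμ : ∀ j, 0 ≤ μ j) (hlam : 0 < lam) {s : ℕ}
    (hs : Fintype.card ι ≤ s) {C : ℝ} (hC : 0 ≤ C) (hsum : ∑ j, μ j ≤ Fintype.card ι * C) :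
    (Fintype.card ι * (lam / (lam + C)) + s - Fintype.card ι) *
        (∑ j, (μ j + lam)⁻¹ - lam * ∑ j, (μ j + lam)⁻¹ ^ 2) ≤
      (∑ j, (μ j + lam)⁻¹) * (s - Fintype.card ι + lam * ∑ j, (μ j + lam)⁻¹) := by
  have hρ := card_mul_div_le_mul_sum_inv (J := Finset.univ) (fun j _ => hμ j) hlam hC hsum
  have hcore := resolvent_sum_ineq hμ hlam (J := Finset.univ) (by simp) hρ
  simp only [Finset.card_univ, sub_self, add_zero, zero_add] at hcore
  have hX : ∑ j, (μ j + lam)⁻¹ - lam * ∑ j, (μ j + lam)⁻¹ ^ 2 ≤ ∑ j, (μ j + lam)⁻¹ :=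
    sub_le_self _ (mul_nonneg hlam.le (Finset.sum_nonneg fun j _ => sq_nonneg _))
  have hsd : (0 : ℝ) ≤ s - Fintype.card ι := sub_nonneg.mpr (by exact_mod_cast hs)
  linarith [mul_le_mul_of_nonneg_left hX hsd]

end Resolvent

section InfoMatrix

variable {d n : ℕ} (a : Fin n → Fin d → ℝ) {lam : ℝ} (S : Finset (Fin n))

theorem infoM_posDef (hlam : 0 < lam) : (infoM d n a lam S).PosDef :=
  PosDef.posSemidef_add
    (posSemidef_sum S fun i _ => posSemidef_vecMulVec_self (a i))
    (PosDef.one.smul hlam)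

theorem infoM_erase_add {i : Fin n} (hi : i ∈ S) :
    infoM d n a lam (S.erase i) + vecMulVec (a i) (a i) = infoM d n a lam S := by
  rw [infoM, infoM, add_right_comm, sum_erase_add _ _ hi]

theorem exists_infoM_spectrum (hlam : 0 < lam) :
    ∃ μ : Fin d → ℝ, (∀ j, 0 ≤ μ j) ∧ #{j | μ j ≠ 0} ≤ #S ∧
      ∑ j, μ j = ∑ i ∈ S, ∑ j, a i j ^ 2 ∧
      ∀ k : ℕ, trace ((infoM d n a lam S)⁻¹ ^ k) = ∑ j, (μ j + lam)⁻¹ ^ k := by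
  have hA : (∑ i ∈ S, vecMulVec (a i) (a i)).PosSemidef :=
    posSemidef_sum S fun i _ => posSemidef_vecMulVec_self (a i)
  refine ⟨hA.isHermitian.eigenvalues, hA.eigenvalues_nonneg, ?_, ?_, fun k =>
    hA.isHermitian.trace_inv_add_smul_one_pow
      (fun j => (add_pos_of_nonneg_of_pos (hA.eigenvalues_nonneg j) hlam).ne') k⟩
  · rw [← Fintype.card_subtype, ← hA.isHermitian.rank_eq_card_non_zero_eigs]
    exact rank_sum_vecMulVec_le S a a
  · have := hA.isHermitian.trace_eq_sum_eigenvalues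
    simp only [trace_sum, trace_vecMulVec, RCLike.ofReal_real_eq_id, id_eq] at this
    simp only [← this, dotProduct, sq]

theorem exists_fS_erase_le (hlam : 0 < lam) (hS : S.Nonempty) :
    0 < #S - d + lam * fS d n a lam S ∧ ∃ i ∈ S, fS d n a lam (S.erase i) ≤
      fS d n a lam S + (fS d n a lam S - lam * trace ((infoM d n a lam S)⁻¹ ^ 2)) /
        (#S - d + lam * fS d n a lam S) := by
  have hM := (infoM_posDef a S hlam).det_pos.ne'.isUnit
  have hgram : infoM d n a lam S - lam • 1 = ∑ i ∈ S, vecMulVec (a i) (a i) :=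
    add_sub_cancel_right _ _
  have hremove : ∀ i ∈ S, a i ⬝ᵥ (infoM d n a lam S)⁻¹ *ᵥ a i < 1 ∧
      fS d n a lam (S.erase i) = fS d n a lam S +
        (a i ⬝ᵥ (infoM d n a lam S)⁻¹ ^ 2 *ᵥ a i) / (1 - a i ⬝ᵥ (infoM d n a lam S)⁻¹ *ᵥ a i) := by
    intro i hi
    have hM' := infoM_posDef a (S.erase i) hlam
    rw [fS, fS, ← infoM_erase_add a S hi]
    exact ⟨hM'.dotProduct_inv_add_vecMulVec_lt_one (a i),
      hM'.trace_inv_eq_trace_inv_add_vecMulVec (a i)⟩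
  have hD : ∑ i ∈ S, (1 - a i ⬝ᵥ (infoM d n a lam S)⁻¹ *ᵥ a i) =
      #S - d + lam * fS d n a lam S := by
    have := trace_inv_pow_succ_mul_sub_smul_one hM lam 0
    rw [hgram, trace_mul_sum_vecMulVec, zero_add, pow_one, pow_zero, trace_one,
      Fintype.card_fin] at this
    rw [sum_sub_distrib, this, fS, sum_const, nsmul_eq_mul, mul_one]
    ring
  have hX : ∑ i ∈ S, a i ⬝ᵥ (infoM d n a lam S)⁻¹ ^ 2 *ᵥ a i =
      fS d n a lam S - lam * trace ((infoM d n a lam S)⁻¹ ^ 2) := by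
    have := trace_inv_pow_succ_mul_sub_smul_one hM lam 1
    rwa [hgram, trace_mul_sum_vecMulVec, pow_one] at this
  have hpos : ∀ i ∈ S, 0 < 1 - a i ⬝ᵥ (infoM d n a lam S)⁻¹ *ᵥ a i :=
    fun i hi => sub_pos.mpr (hremove i hi).1
  obtain ⟨i, hi, hle⟩ := exists_div_le_sum_div hS _ hpos
  refine ⟨hD ▸ sum_pos hpos hS, i, hi, ?_⟩
  rw [(hremove i hi).2, ← hD, ← hX]
  gcongr

theorem sInf_fS_erase_le (hlam : 0 < lam) (hS : S.Nonempty) {c : ℝ} (hc : 0 < c)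
    (h : c * (fS d n a lam S - lam * trace ((infoM d n a lam S)⁻¹ ^ 2)) ≤
      fS d n a lam S * (#S - d + lam * fS d n a lam S)) :
    sInf {r : ℝ | ∃ i ∈ S, fS d n a lam (S.erase i) = r} ≤ (1 + 1 / c) * fS d n a lam S := by
  obtain ⟨hD, i, hi, hle⟩ := exists_fS_erase_le a S hlam hS
  have hbdd : BddBelow {r : ℝ | ∃ i ∈ S, fS d n a lam (S.erase i) = r} := by
    refine ⟨0, ?_⟩
    rintro _ ⟨j, -, rfl⟩
    exact (infoM_posDef a _ hlam).inv.posSemidef.trace_nonneg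
  have hdiv : (fS d n a lam S - lam * trace ((infoM d n a lam S)⁻¹ ^ 2)) /
      (#S - d + lam * fS d n a lam S) ≤ fS d n a lam S / c := by
    rwa [div_le_div_iff₀ hD hc, mul_comm _ c]
  calc sInf {r : ℝ | ∃ i ∈ S, fS d n a lam (S.erase i) = r}
      ≤ fS d n a lam (S.erase i) := csInf_le hbdd ⟨i, hi, rfl⟩
    _ ≤ fS d n a lam S + fS d n a lam S / c := hle.trans (by gcongr)
    _ = (1 + 1 / c) * fS d n a lam S := by ring

end InfoMatrix

theorem stmt3_general (d n : ℕ) (hd : 1 ≤ d)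
    (a : Fin n → Fin d → ℝ) (lam : ℝ) (hlam : 0 < lam)
    (S : Finset (Fin n)) (hS : S.Nonempty)
    (rho : ℝ)
    (hrho : rho = lam / (lam + max 1 ((S.card : ℝ) / (d : ℝ)) *
      (⨆ i : Fin n, ∑ j, (a i j) ^ 2))) :
    (S.card < d →
      sInf {r : ℝ | ∃ i ∈ S, fS d n a lam (S.erase i) = r} ≤
        (1 + 1 / ((S.card : ℝ) * rho + (d : ℝ) - S.card)) * fS d n a lam S) ∧
    (d ≤ S.card →
      sInf {r : ℝ | ∃ i ∈ S, fS d n a lam (S.erase i) = r} ≤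
        (1 + 1 / ((d : ℝ) * rho + (S.card : ℝ) - d)) * fS d n a lam S) := by
  obtain ⟨μ, hμ, hsupp, hsum, htrace⟩ := exists_infoM_spectrum a S hlam
  have hfS : fS d n a lam S = ∑ j, (μ j + lam)⁻¹ := by simpa [fS] using htrace 1
  set B := ⨆ i : Fin n, ∑ j, a i j ^ 2
  set C := max 1 ((#S : ℝ) / d) * B
  have hB : 0 ≤ B := Real.iSup_nonneg fun i => sum_nonneg fun j _ => sq_nonneg _
  have hC : 0 ≤ C := mul_nonneg (zero_le_one.trans (le_max_left _ _)) hB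
  have hμB : ∑ j, μ j ≤ #S * B := hsum ▸ sum_le_card_mul_iSup S _
  have hρ : 0 < rho := hrho ▸ div_pos hlam (by positivity)
  have hd' : (0 : ℝ) < d := by exact_mod_cast hd
  refine ⟨fun hsd => sInf_fS_erase_le a S hlam hS ?_ ?_,
    fun hds => sInf_fS_erase_le a S hlam hS ?_ ?_⟩
  · have : (#S : ℝ) < d := by exact_mod_cast hsd
    have : 0 ≤ (#S : ℝ) * rho := by positivity
    linarith
  · have hμC : ∑ j, μ j ≤ #S * C :=
      hμB.trans (by gcongr; exact le_mul_of_one_le_left hB (le_max_left _ _))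
    have := resolvent_sum_ineq_of_le_card hμ hlam (by simpa using hsd.le) hsupp hC hμC
    rwa [Fintype.card_fin, ← hrho, ← hfS, ← htrace 2] at this
  · have : (d : ℝ) ≤ #S := by exact_mod_cast hds
    have : 0 < (d : ℝ) * rho := by positivity
    linarith
  · have hμC : ∑ j, μ j ≤ d * C := hμB.trans <| calc
      (#S : ℝ) * B = d * ((#S : ℝ) / d * B) := by field_simp
      _ ≤ d * C := by gcongr; exact mul_le_mul_of_nonneg_right (le_max_right _ _) hB
    have := resolvent_sum_ineq_of_card_le hμ hlam (by simpa using hds) hC (by simpa using hμC)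
    rwa [Fintype.card_fin, ← hrho, ← hfS, ← htrace 2] at this

theorem stmt3 (d n : ℕ) (hd : 1 ≤ d) (hdn : d ≤ n)
    (a : Fin n → Fin d → ℝ) (lam : ℝ) (hlam : 0 < lam)
    (S : Finset (Fin n)) (hS : S.Nonempty)
    (rho : ℝ)
    (hrho : rho = lam / (lam + max 1 ((S.card : ℝ) / (d : ℝ)) *
      (⨆ i : Fin n, ∑ j, (a i j) ^ 2))) :
    (S.card < d →
      sInf {r : ℝ | ∃ i ∈ S, fS d n a lam (S.erase i) = r} ≤
        (1 + 1 / ((S.card : ℝ) * rho + (d : ℝ) - S.card)) * fS d n a lam S) ∧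
    (d ≤ S.card →
      sInf {r : ℝ | ∃ i ∈ S, fS d n a lam (S.erase i) = r} ≤
        (1 + 1 / ((d : ℝ) * rho + (S.card : ℝ) - d)) * fS d n a lam S) :=
  stmt3_general d n hd a lam hlam S hS rho hrho
end

section
/- Suppose n = d and a_i = e_i is the i-th standard basis vector of ℝ^d for each i. Then for every k with 1 ≤ k ≤ d−1: (a) every subset S of size k satisfies f(S) = k/(1+λ) + (d−k)/λ, so z_k = k/(1+λ) + (d−k)/λ; (b) ν_k^C ≤ d·n/(k + n·λ); and consequently (c) z_k/ν_k^C ≥ k(d−k)/(d·n·λ), which tends to infinity as λ → 0⁺. -/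
open Matrix Finset

noncomputable section


/-- The matrix `∑_i x_i a_i a_iᵀ + λ I_d` for a fractional vector `x`. -/
def contM (d n : ℕ) (a : Fin n → Fin d → ℝ) (lam : ℝ) (x : Fin n → ℝ) :
    Matrix (Fin d) (Fin d) ℝ :=
  (∑ i : Fin n, x i • Matrix.vecMulVec (a i) (a i)) + lam • (1 : Matrix (Fin d) (Fin d) ℝ)

/-- The continuous relaxation value `ν_k^C`. -/
def nuC (d n : ℕ) (a : Fin n → Fin d → ℝ) (lam : ℝ) (k : ℕ) : ℝ :=
  sInf {r : ℝ | ∃ x : Fin n → ℝ, (∀ i, 0 ≤ x i ∧ x i ≤ 1) ∧ (∑ i, x i) = (k : ℝ) ∧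
    Matrix.trace (contM d n a lam x)⁻¹ = r}

end

/-! For `a_i = e_i` every matrix in sight is diagonal, `diag (x_j + λ)`, so both objectives are
sums `∑ j, (x_j + λ)⁻¹`. Every set of size `k` gives the same value, while the uniform fractional
point `x ≡ k / d` gives `d² / (k + dλ)`; the constraint `x ≤ 1` keeps `ν_k^C ≥ d / (1 + λ) > 0`. -/

open Filter Topology

lemma Matrix.trace_inv_diagonal {ι K : Type*} [Fintype ι] [DecidableEq ι] [Field K] {v : ι → K}
    (hv : ∀ i, v i ≠ 0) :
    trace (diagonal v)⁻¹ = ∑ i, (v i)⁻¹ := by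
  have hinv : (diagonal v)⁻¹ = diagonal fun i => (v i)⁻¹ := by
    refine inv_eq_right_inv ?_
    rw [diagonal_mul_diagonal, ← diagonal_one]
    exact congrArg diagonal (funext fun i => mul_inv_cancel₀ (hv i))
  rw [hinv, trace_diagonal]

lemma infoM_eq_contM (d n : ℕ) (a : Fin n → Fin d → ℝ) (lam : ℝ) (S : Finset (Fin n)) :
    infoM d n a lam S = contM d n a lam fun i => if i ∈ S then 1 else 0 := by
  simp only [infoM, contM, ite_smul, one_smul, zero_smul, Finset.sum_ite_mem, univ_inter]

lemma contM_single_one (d : ℕ) (lam : ℝ) (x : Fin d → ℝ) :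
    contM d d (fun i => Pi.single i 1) lam x = diagonal fun j => x j + lam := by
  simp only [contM, ← single_eq_single_vecMulVec_single, smul_single, smul_eq_mul, mul_one,
    sum_single_eq_diagonal, smul_one_eq_diagonal, diagonal_add]

lemma trace_inv_contM_single_one (d : ℕ) {lam : ℝ} {x : Fin d → ℝ}
    (hx : ∀ i, x i + lam ≠ 0) :
    trace (contM d d (fun i => Pi.single i 1) lam x)⁻¹ = ∑ i, (x i + lam)⁻¹ := by
  rw [contM_single_one, trace_inv_diagonal hx]

lemma fS_single_one (d : ℕ) {lam : ℝ} (hlam : 0 < lam) (S : Finset (Fin d)) :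
    fS d d (fun i => Pi.single i 1) lam S = #S / (1 + lam) + (d - #S) / lam := by
  rw [fS, infoM_eq_contM, trace_inv_contM_single_one d fun i => by split_ifs <;> positivity]
  simp only [apply_ite (fun t : ℝ => (t + lam)⁻¹), zero_add, Finset.sum_ite, sum_const,
    nsmul_eq_mul, Finset.filter_mem_eq_inter, univ_inter, filter_not, card_sdiff, card_univ]
  rw [inter_univ, Nat.cast_sub (card_le_univ S), Fintype.card_fin, div_eq_mul_inv,
    div_eq_mul_inv]

lemma zk_eq_of_forall_card_eq (d n : ℕ) (a : Fin n → Fin d → ℝ) (lam : ℝ) {k : ℕ} (hk : k ≤ n)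
    {c : ℝ} (hc : ∀ S : Finset (Fin n), #S = k → fS d n a lam S = c) :
    zk d n a lam k = c := by
  obtain ⟨S₀, -, hS₀⟩ := exists_subset_card_eq (s := (univ : Finset (Fin n))) (by simpa using hk)
  have hval : {r | ∃ S : Finset (Fin n), #S = k ∧ fS d n a lam S = r} = {c} := by
    ext r
    constructor
    · rintro ⟨S, hS, rfl⟩
      exact hc S hS
    · rintro rfl
      exact ⟨S₀, hS₀, hc S₀ hS₀⟩
  rw [zk, hval, csInf_singleton]

section Relaxation

variable (d : ℕ) {lam : ℝ}

lemma div_one_add_le_trace_inv_contM_single_one (hlam : 0 < lam) {x : Fin d → ℝ}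
    (hx : ∀ i, 0 ≤ x i ∧ x i ≤ 1) :
    d / (1 + lam) ≤ trace (contM d d (fun i => Pi.single i 1) lam x)⁻¹ := by
  rw [trace_inv_contM_single_one d fun i => by linarith [(hx i).1]]
  calc (d : ℝ) / (1 + lam) = ∑ _i : Fin d, (1 + lam)⁻¹ := by simp [div_eq_mul_inv]
    _ ≤ ∑ i, (x i + lam)⁻¹ := by
      gcongr with i
      · linarith [(hx i).1]
      · exact (hx i).2

lemma trace_inv_contM_single_one_uniform (hlam : 0 < lam) (k : ℕ) :
    trace (contM d d (fun i => Pi.single i 1) lam fun _ => (k : ℝ) / d)⁻¹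
      = d * d / (k + d * lam) := by
  rcases Nat.eq_zero_or_pos d with rfl | hd
  · simp
  rw [trace_inv_contM_single_one d fun _ => by positivity]
  simp only [sum_const, card_univ, Fintype.card_fin, nsmul_eq_mul]
  field_simp

lemma nuC_single_one_mem_Icc (hlam : 0 < lam) {k : ℕ} (hk : k ≤ d) :
    nuC d d (fun i => Pi.single i 1) lam k ∈ Set.Icc (d / (1 + lam)) (d * d / (k + d * lam)) := by
  have hk' : (k : ℝ) ≤ d := by exact_mod_cast hk
  have huniform :
      (∀ _i : Fin d, 0 ≤ (k : ℝ) / d ∧ (k : ℝ) / d ≤ 1) ∧ ∑ _i : Fin d, (k : ℝ) / d = k := by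
    refine ⟨fun _ => ⟨by positivity, div_le_one_of_le₀ hk' (by positivity)⟩, ?_⟩
    rcases Nat.eq_zero_or_pos d with rfl | hd
    · simp_all
    · simp only [sum_const, card_univ, Fintype.card_fin, nsmul_eq_mul]
      field_simp
  have hlower : ∀ r ∈ {r : ℝ | ∃ x : Fin d → ℝ, (∀ i, 0 ≤ x i ∧ x i ≤ 1) ∧ (∑ i, x i) = (k : ℝ) ∧
      trace (contM d d (fun i => Pi.single i 1) lam x)⁻¹ = r}, d / (1 + lam) ≤ r := by
    rintro r ⟨x, hx, -, rfl⟩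
    exact div_one_add_le_trace_inv_contM_single_one d hlam hx
  have hmem := trace_inv_contM_single_one_uniform d hlam k
  exact ⟨le_csInf ⟨_, _, huniform.1, huniform.2, hmem⟩ hlower,
    csInf_le ⟨_, hlower⟩ ⟨_, huniform.1, huniform.2, hmem⟩⟩

end Relaxation

lemma tendsto_div_mul_nhdsGT_zero_atTop {c b : ℝ} (hc : 0 < c) (hb : 0 < b) :
    Tendsto (fun l => c / (b * l)) (𝓝[>] 0) atTop := by
  simpa only [div_eq_mul_inv, mul_inv, mul_assoc] using
    tendsto_inv_nhdsGT_zero.const_mul_atTop (div_pos hc hb)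

lemma integrality_gap_lower_bound {d k lam ν : ℝ} (hlam : 0 < lam) (hk : 0 < k) (hkd : k ≤ d)
    (hν : 0 < ν) (hνle : ν ≤ d * d / (k + d * lam)) :
    k * (d - k) / (d * d * lam) ≤ (k / (1 + lam) + (d - k) / lam) / ν := by
  have hd : 0 < d := hk.trans_le hkd
  have hdk : 0 ≤ d - k := sub_nonneg.mpr hkd
  rw [le_div_iff₀ hν]
  calc k * (d - k) / (d * d * lam) * ν
        ≤ k * (d - k) / (d * d * lam) * (d * d / (k + d * lam)) := by gcongr
    _ = (d - k) / lam * (k / (k + d * lam)) := by field_simp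
    _ ≤ (d - k) / lam :=
        mul_le_of_le_one_right (by positivity) (div_le_one_of_le₀ (by nlinarith) (by positivity))
    _ ≤ k / (1 + lam) + (d - k) / lam := le_add_of_nonneg_left (by positivity)

theorem stmt5_general (d : ℕ)
    (a : Fin d → Fin d → ℝ) (ha : ∀ i j, a i j = if j = i then 1 else 0)
    (lam : ℝ) (hlam : 0 < lam)
    (k : ℕ) (hk1 : 1 ≤ k) (hkd : k < d) :
    ((∀ S : Finset (Fin d), S.card = k →
        fS d d a lam S = (k : ℝ) / (1 + lam) + ((d : ℝ) - k) / lam) ∧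
      zk d d a lam k = (k : ℝ) / (1 + lam) + ((d : ℝ) - k) / lam) ∧
    nuC d d a lam k ≤ (d : ℝ) * d / ((k : ℝ) + (d : ℝ) * lam) ∧
    ((k : ℝ) * ((d : ℝ) - k) / ((d : ℝ) * (d : ℝ) * lam) ≤
      zk d d a lam k / nuC d d a lam k) ∧
    Filter.Tendsto (fun l : ℝ => (k : ℝ) * ((d : ℝ) - k) / ((d : ℝ) * (d : ℝ) * l))
      (nhdsWithin 0 (Set.Ioi 0)) Filter.atTop := by
  obtain rfl : a = fun i => Pi.single i 1 := funext₂ fun i j => by rw [ha, Pi.single_apply]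
  have hk : (0 : ℝ) < k := by exact_mod_cast hk1
  have hkd' : (k : ℝ) < d := by exact_mod_cast hkd
  have hd : (0 : ℝ) < d := hk.trans hkd'
  have hfS (S : Finset (Fin d)) (hS : #S = k) :
      fS d d (fun i => Pi.single i 1) lam S = k / (1 + lam) + (d - k) / lam := by
    rw [fS_single_one d hlam, hS]
  have hzk := zk_eq_of_forall_card_eq d d _ lam hkd.le hfS
  obtain ⟨hν_ge, hν_le⟩ := nuC_single_one_mem_Icc d hlam hkd.le
  have hν : 0 < nuC d d (fun i => Pi.single i 1) lam k := hν_ge.trans_lt' (by positivity)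
  refine ⟨⟨hfS, hzk⟩, hν_le, ?_, ?_⟩
  · rw [hzk]
    exact integrality_gap_lower_bound hlam hk hkd'.le hν hν_le
  · exact tendsto_div_mul_nhdsGT_zero_atTop (mul_pos hk (sub_pos.mpr hkd')) (by positivity)

theorem stmt5 (d : ℕ) (hd : 1 ≤ d)
    (a : Fin d → Fin d → ℝ) (ha : ∀ i j, a i j = if j = i then 1 else 0)
    (lam : ℝ) (hlam : 0 < lam)
    (k : ℕ) (hk1 : 1 ≤ k) (hkd : k < d) :
    ((∀ S : Finset (Fin d), S.card = k →
        fS d d a lam S = (k : ℝ) / (1 + lam) + ((d : ℝ) - k) / lam) ∧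
      zk d d a lam k = (k : ℝ) / (1 + lam) + ((d : ℝ) - k) / lam) ∧
    nuC d d a lam k ≤ (d : ℝ) * d / ((k : ℝ) + (d : ℝ) * lam) ∧
    ((k : ℝ) * ((d : ℝ) - k) / ((d : ℝ) * (d : ℝ) * lam) ≤
      zk d d a lam k / nuC d d a lam k) ∧
    Filter.Tendsto (fun l : ℝ => (k : ℝ) * ((d : ℝ) - k) / ((d : ℝ) * (d : ℝ) * l))
      (nhdsWithin 0 (Set.Ioi 0)) Filter.atTop :=
  stmt5_general d a ha lam hlam k hk1 hkd
end

section
/- For every vector x ∈ [0,1]^n, the function X ↦ (1/λ)·‖X·Diag(√x)·Aᵀ − I_d‖_F² + ‖X‖_F² over X ∈ ℝ^{d×n} attains its infimum, and its minimum value equals tr((Σ_{i=1}^n x_i a_i a_iᵀ + λ I_d)⁻¹). -/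
open Matrix Finset

noncomputable section


/-- The squared Frobenius norm `‖M‖_F²`. -/
def fro2 {m p : ℕ} (M : Matrix (Fin m) (Fin p) ℝ) : ℝ := ∑ i, ∑ j, (M i j) ^ 2

end

/-!
With `B = A Diag(√x)` we have `B Bᵀ + λ I = ∑ xᵢ aᵢ aᵢᵀ + λ I =: M`, and the objective is the ridge
regression objective `(1/λ) ‖X Bᵀ - I‖² + ‖X‖²`. The push-through identity
`M B = B N` with `N = Bᵀ B + λ I` lets one complete the square:
`(X Bᵀ - I)(X Bᵀ - I)ᵀ + λ X Xᵀ = (X - X₀) N (X - X₀)ᵀ + λ M⁻¹` for `X₀ = M⁻¹ B`.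
Taking traces, the first term is nonnegative (`N` is positive definite) and vanishes at `X₀`.
-/

namespace Matrix

variable {m p : Type*} [Fintype m] [Fintype p]

lemma posDef_mul_transpose_add_smul_one [DecidableEq m] (B : Matrix m p ℝ) {lam : ℝ}
    (hlam : 0 < lam) : (B * Bᵀ + lam • (1 : Matrix m m ℝ)).PosDef := by
  have hBBt : (B * Bᵀ).PosSemidef := by simpa using posSemidef_self_mul_conjTranspose B
  exact PosDef.posSemidef_add hBBt (PosDef.one.smul hlam)

lemma mul_transpose_add_smul_one_mul [DecidableEq m] [DecidableEq p] (B : Matrix m p ℝ)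
    (lam : ℝ) :
    (B * Bᵀ + lam • (1 : Matrix m m ℝ)) * B = B * (Bᵀ * B + lam • (1 : Matrix p p ℝ)) := by
  rw [Matrix.add_mul, Matrix.mul_add, Matrix.mul_assoc, Matrix.smul_mul, Matrix.mul_smul,
    Matrix.one_mul, Matrix.mul_one]

lemma trace_mul_mul_transpose_nonneg {N : Matrix p p ℝ} (hN : N.PosSemidef)
    (Y : Matrix m p ℝ) : 0 ≤ (Y * N * Yᵀ).trace := by
  simpa using (hN.mul_mul_conjTranspose_same Y).trace_nonneg

theorem mul_transpose_sub_one_mul_transpose_add_smul_eq [DecidableEq m] [DecidableEq p]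
    (B X : Matrix m p ℝ) {lam : ℝ} (hlam : 0 < lam) :
    (X * Bᵀ - 1) * (X * Bᵀ - 1)ᵀ + lam • (X * Xᵀ) =
      (X - (B * Bᵀ + lam • 1)⁻¹ * B) * (Bᵀ * B + lam • 1) * (X - (B * Bᵀ + lam • 1)⁻¹ * B)ᵀ
        + lam • (B * Bᵀ + lam • 1)⁻¹ := by
  have hM := (posDef_mul_transpose_add_smul_one B hlam).isUnit
  rw [isUnit_iff_isUnit_det] at hM
  have hN_symm : (Bᵀ * B + lam • (1 : Matrix p p ℝ))ᵀ = Bᵀ * B + lam • 1 := by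
    simp [transpose_add, transpose_mul]
  set M : Matrix m m ℝ := B * Bᵀ + lam • 1 with hM_def
  set N : Matrix p p ℝ := Bᵀ * B + lam • 1 with hN_def
  set X₀ := M⁻¹ * B
  have hX₀N : X₀ * N = B := by
    rw [Matrix.mul_assoc, ← mul_transpose_add_smul_one_mul, ← hM_def, ← Matrix.mul_assoc,
      nonsing_inv_mul M hM, Matrix.one_mul]
  have hNX₀t : N * X₀ᵀ = Bᵀ := by
    rw [← hN_symm, ← transpose_mul, hX₀N]
  have hX₀Bt : X₀ * Bᵀ = 1 - lam • M⁻¹ := by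
    have hBBt : B * Bᵀ = M - lam • 1 := by rw [hM_def]; abel
    rw [Matrix.mul_assoc, hBBt, Matrix.mul_sub, nonsing_inv_mul M hM, Matrix.mul_smul,
      Matrix.mul_one]
  have hX₀NXt : X₀ * N * Xᵀ = (X * Bᵀ)ᵀ := by
    rw [hX₀N, transpose_mul, transpose_transpose]
  calc (X * Bᵀ - 1) * (X * Bᵀ - 1)ᵀ + lam • (X * Xᵀ)
      = X * N * Xᵀ - X * Bᵀ - (X * Bᵀ)ᵀ + 1 := by
        simp only [hN_def, transpose_sub, transpose_one, transpose_mul, transpose_transpose,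
          Matrix.sub_mul, Matrix.mul_sub, Matrix.add_mul, Matrix.mul_add, Matrix.smul_mul,
          Matrix.mul_smul, Matrix.one_mul, Matrix.mul_one, Matrix.mul_assoc]
        abel
    _ = X * N * Xᵀ - X * (N * X₀ᵀ) - X₀ * N * Xᵀ + X₀ * (N * X₀ᵀ) + lam • M⁻¹ := by
        rw [hNX₀t, hX₀NXt, hX₀Bt]; abel
    _ = (X - X₀) * N * (X - X₀)ᵀ + lam • M⁻¹ := by
        simp only [transpose_sub, Matrix.sub_mul, Matrix.mul_sub, Matrix.mul_assoc]
        abel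

end Matrix

open Matrix

section RidgeObjective

variable {m p : Type*} [Fintype m] [Fintype p] [DecidableEq m]

noncomputable def ridgeObjective (B : Matrix m p ℝ) (lam : ℝ) (X : Matrix m p ℝ) : ℝ :=
  (1 / lam) * ((X * Bᵀ - 1) * (X * Bᵀ - 1)ᵀ).trace + (X * Xᵀ).trace

variable [DecidableEq p] (B : Matrix m p ℝ) {lam : ℝ}

theorem ridgeObjective_eq (hlam : 0 < lam) (X : Matrix m p ℝ) :
    ridgeObjective B lam X =
      (1 / lam) * ((X - (B * Bᵀ + lam • 1)⁻¹ * B) * (Bᵀ * B + lam • 1) *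
        (X - (B * Bᵀ + lam • 1)⁻¹ * B)ᵀ).trace + (B * Bᵀ + lam • 1)⁻¹.trace := by
  have h := congrArg trace (mul_transpose_sub_one_mul_transpose_add_smul_eq B X hlam)
  simp only [trace_add, trace_smul, smul_eq_mul] at h
  rw [ridgeObjective]
  field_simp
  linarith

theorem ridgeObjective_inv_mul_le (hlam : 0 < lam) (X : Matrix m p ℝ) :
    ridgeObjective B lam ((B * Bᵀ + lam • 1)⁻¹ * B) ≤ ridgeObjective B lam X := by
  have hN := (posDef_mul_transpose_add_smul_one Bᵀ hlam).posSemidef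
  rw [transpose_transpose] at hN
  rw [ridgeObjective_eq B hlam, ridgeObjective_eq B hlam, sub_self]
  simp only [Matrix.zero_mul, trace_zero, mul_zero, zero_add]
  exact le_add_of_nonneg_left <| mul_nonneg (by positivity) <|
    trace_mul_mul_transpose_nonneg hN _

theorem ridgeObjective_inv_mul (hlam : 0 < lam) :
    ridgeObjective B lam ((B * Bᵀ + lam • 1)⁻¹ * B) = (B * Bᵀ + lam • 1)⁻¹.trace := by
  simp [ridgeObjective_eq B hlam]

end RidgeObjective

lemma fro2_eq_trace {m p : ℕ} (M : Matrix (Fin m) (Fin p) ℝ) : fro2 M = (M * Mᵀ).trace := by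
  simp [fro2, trace, mul_apply, sq]

lemma contM_eq_mul_transpose_add_smul_one {d n : ℕ} (a : Fin n → Fin d → ℝ) (lam : ℝ)
    {x : Fin n → ℝ} (hx : ∀ i, 0 ≤ x i) :
    contM d n a lam x =
      Amat d n a * diagonal (fun i => √(x i)) * (Amat d n a * diagonal (fun i => √(x i)))ᵀ
        + lam • 1 := by
  ext i j
  rw [contM, Matrix.add_apply, Matrix.add_apply, mul_apply]
  simp only [Matrix.sum_apply, Matrix.smul_apply, vecMulVec_apply, transpose_apply,
    mul_diagonal, Amat, of_apply, smul_eq_mul]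
  congr 1
  refine Finset.sum_congr rfl fun k _ => ?_
  linear_combination -(a k i * a k j) * Real.mul_self_sqrt (hx k)

theorem stmt6_general (d n : ℕ)
    (a : Fin n → Fin d → ℝ) (lam : ℝ) (hlam : 0 < lam)
    (x : Fin n → ℝ) (hx : ∀ i, 0 ≤ x i ∧ x i ≤ 1) :
    ∃ X0 : Matrix (Fin d) (Fin n) ℝ,
      (∀ X : Matrix (Fin d) (Fin n) ℝ,
        (1 / lam) * fro2 (X0 * Matrix.diagonal (fun i => Real.sqrt (x i)) * (Amat d n a)ᵀ -
            (1 : Matrix (Fin d) (Fin d) ℝ)) + fro2 X0 ≤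
        (1 / lam) * fro2 (X * Matrix.diagonal (fun i => Real.sqrt (x i)) * (Amat d n a)ᵀ -
            (1 : Matrix (Fin d) (Fin d) ℝ)) + fro2 X) ∧
      (1 / lam) * fro2 (X0 * Matrix.diagonal (fun i => Real.sqrt (x i)) * (Amat d n a)ᵀ -
          (1 : Matrix (Fin d) (Fin d) ℝ)) + fro2 X0 =
        Matrix.trace (contM d n a lam x)⁻¹ := by
  set B := Amat d n a * diagonal (fun i => √(x i))
  have hobjective : ∀ X : Matrix (Fin d) (Fin n) ℝ,
      (1 / lam) * fro2 (X * diagonal (fun i => √(x i)) * (Amat d n a)ᵀ - 1) + fro2 X =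
        ridgeObjective B lam X := fun X => by
    rw [fro2_eq_trace, fro2_eq_trace, ridgeObjective, transpose_mul, diagonal_transpose,
      Matrix.mul_assoc]
  simp only [hobjective, contM_eq_mul_transpose_add_smul_one a lam fun i => (hx i).1]
  exact ⟨_, ridgeObjective_inv_mul_le B hlam, ridgeObjective_inv_mul B hlam⟩

theorem stmt6 (d n : ℕ) (hd : 1 ≤ d) (hdn : d ≤ n)
    (a : Fin n → Fin d → ℝ) (lam : ℝ) (hlam : 0 < lam)
    (x : Fin n → ℝ) (hx : ∀ i, 0 ≤ x i ∧ x i ≤ 1) :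
    ∃ X0 : Matrix (Fin d) (Fin n) ℝ,
      (∀ X : Matrix (Fin d) (Fin n) ℝ,
        (1 / lam) * fro2 (X0 * Matrix.diagonal (fun i => Real.sqrt (x i)) * (Amat d n a)ᵀ -
            (1 : Matrix (Fin d) (Fin d) ℝ)) + fro2 X0 ≤
        (1 / lam) * fro2 (X * Matrix.diagonal (fun i => Real.sqrt (x i)) * (Amat d n a)ᵀ -
            (1 : Matrix (Fin d) (Fin d) ℝ)) + fro2 X) ∧
      (1 / lam) * fro2 (X0 * Matrix.diagonal (fun i => Real.sqrt (x i)) * (Amat d n a)ᵀ -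
          (1 : Matrix (Fin d) (Fin d) ℝ)) + fro2 X0 =
        Matrix.trace (contM d n a lam x)⁻¹ :=
  stmt6_general d n a lam hlam x hx
end

section
/- z_k equals the minimum, over x ∈ {0,1}^n, X ∈ ℝ^{d×n} and μ ∈ ℝ₊^n subject to ‖X_i‖₂² ≤ μ_i·x_i for all i ∈ {1,...,n} and Σ_{i=1}^n x_i = k, of (1/λ)·‖X·Aᵀ − I_d‖_F² + Σ_{i=1}^n μ_i, where X_i denotes the i-th column of X. Moreover, relaxing x ∈ {0,1}^n to x ∈ [0,1]^n in this problem, the minimum value equals ν_k^C. -/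
/-
For weights `x ≥ 0` put `M = A diag(x) Aᵀ + λ I` and `B = M⁻¹`. The inner problem over `(X, μ)`
has value `tr B`. It is attained at `X = B A diag(x)`, `μ_i = x_i ‖B a_i‖²`. It is bounded below
by `tr B` because `‖X_i‖² ≤ μ_i x_i` gives `2 ⟨B a_i, X_i⟩ - x_i ‖B a_i‖² ≤ μ_i`, and summing these
against `0 ≤ ‖X Aᵀ - I + λ B‖_F²` leaves exactly `tr B`. Taking the infimum over `x` on both sides
gives both identities; for `x` the indicator of `S`, `M` is the information matrix of `S`.
-/

open Matrix Finset

section InnerProblem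

variable {m ι : Type*} [Fintype m] [Fintype ι]

theorem two_mul_dotProduct_sub_le {g y : m → ℝ} {t μ : ℝ} (ht : 0 ≤ t) (hμ : 0 ≤ μ)
    (h : y ⬝ᵥ y ≤ μ * t) : 2 * (g ⬝ᵥ y) - t * (g ⬝ᵥ g) ≤ μ := by
  rcases ht.eq_or_lt with rfl | ht
  · have hy : y = 0 := dotProduct_self_eq_zero.1 (le_antisymm (by simpa using h)
      (by simpa using dotProduct_star_self_nonneg y))
    simpa [hy] using hμ
  · have hsq : 0 ≤ (y - t • g) ⬝ᵥ (y - t • g) := by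
      simpa using dotProduct_star_self_nonneg (y - t • g)
    simp only [sub_dotProduct, dotProduct_sub, smul_dotProduct, dotProduct_smul, smul_eq_mul,
      dotProduct_comm y g] at hsq
    nlinarith

theorem sum_sq_eq_trace_mul_transpose (Y : Matrix m ι ℝ) :
    ∑ p, ∑ q, Y p q ^ 2 = trace (Y * Yᵀ) := by
  simp [trace, mul_apply, sq]

theorem trace_mul_transpose_eq_sum_dotProduct (X G : Matrix m ι ℝ) :
    trace (X * Gᵀ) = ∑ i, Gᵀ i ⬝ᵥ Xᵀ i := by
  simp only [trace, Matrix.diag, mul_apply, transpose_apply, dotProduct]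
  rw [Finset.sum_comm]
  exact Finset.sum_congr rfl fun _ _ => Finset.sum_congr rfl fun _ _ => mul_comm _ _

theorem trace_add_smul_mul_transpose_add_smul {Y B : Matrix m m ℝ} (hB : Bᵀ = B) (c : ℝ) :
    trace ((Y + c • B) * (Y + c • B)ᵀ) =
      trace (Y * Yᵀ) + 2 * c * trace (Y * B) + c ^ 2 * trace (B * B) := by
  have hBY : trace (B * Yᵀ) = trace (Y * B) := by
    rw [← trace_transpose, transpose_mul, transpose_transpose, hB]
  simp only [transpose_add, transpose_smul, hB, add_mul, mul_add, Matrix.smul_mul,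
    Matrix.mul_smul, trace_add, trace_smul, hBY, smul_eq_mul]
  ring

variable [DecidableEq ι]

theorem trace_mul_diagonal_mul_transpose (G : Matrix m ι ℝ) (x : ι → ℝ) :
    trace (G * diagonal x * Gᵀ) = ∑ i, x i * (Gᵀ i ⬝ᵥ Gᵀ i) := by
  simp only [trace, Matrix.diag, mul_apply, diagonal_apply, mul_ite, mul_zero, Finset.sum_ite_eq',
    Finset.mem_univ, if_true, transpose_apply, dotProduct, Finset.mul_sum]
  rw [Finset.sum_comm]
  exact Finset.sum_congr rfl fun _ _ => Finset.sum_congr rfl fun _ _ => by ring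

variable [DecidableEq m] (A : Matrix m ι ℝ) {x : ι → ℝ} {lam : ℝ}

local notation "M" => A * diagonal x * Aᵀ + lam • 1

theorem posDef_mul_diagonal_mul_transpose_add_smul_one (hx : 0 ≤ x) (hlam : 0 < lam) :
    (M).PosDef := by
  have hG := (PosSemidef.diagonal hx).mul_mul_conjTranspose_same A
  rw [conjTranspose_eq_transpose_of_trivial] at hG
  exact PosDef.posSemidef_add hG (PosDef.one.smul hlam)

theorem transpose_inv_mul_diagonal_mul_transpose_add_smul_one (hx : 0 ≤ x) (hlam : 0 < lam) :
    (M)⁻¹ᵀ = (M)⁻¹ := by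
  simpa [conjTranspose_eq_transpose_of_trivial] using
    ((posDef_mul_diagonal_mul_transpose_add_smul_one A hx hlam).inv.isHermitian).eq

theorem inv_mul_mul_diagonal_mul_transpose (hx : 0 ≤ x) (hlam : 0 < lam) :
    (M)⁻¹ * (A * diagonal x * Aᵀ) = 1 - lam • (M)⁻¹ := by
  have hM := (posDef_mul_diagonal_mul_transpose_add_smul_one A hx hlam).isUnit
  calc (M)⁻¹ * (A * diagonal x * Aᵀ) = (M)⁻¹ * (M) - (M)⁻¹ * (lam • 1) := by
        rw [← Matrix.mul_sub, add_sub_cancel_right]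
    _ = 1 - lam • (M)⁻¹ := by
        rw [nonsing_inv_mul _ ((isUnit_iff_isUnit_det _).1 hM), Matrix.mul_smul, Matrix.mul_one]

theorem trace_inv_mul_mul_diagonal_mul_transpose (hx : 0 ≤ x) (hlam : 0 < lam) :
    trace ((M)⁻¹ * A * diagonal x * ((M)⁻¹ * A)ᵀ) =
      trace (M)⁻¹ - lam * trace ((M)⁻¹ * (M)⁻¹) := by
  rw [transpose_mul, transpose_inv_mul_diagonal_mul_transpose_add_smul_one A hx hlam,
    show ∀ B : Matrix m m ℝ, B * A * diagonal x * (Aᵀ * B) = B * (A * diagonal x * Aᵀ) * B by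
      simp [Matrix.mul_assoc],
    inv_mul_mul_diagonal_mul_transpose A hx hlam, Matrix.sub_mul,
    Matrix.one_mul, Matrix.smul_mul, trace_sub, trace_smul, smul_eq_mul]

theorem trace_inv_le_sum_sq_div_add_sum (hx : 0 ≤ x) (hlam : 0 < lam) {X : Matrix m ι ℝ}
    {mu : ι → ℝ} (hmu : ∀ i, 0 ≤ mu i) (hX : ∀ i, ∑ j, X j i ^ 2 ≤ mu i * x i) :
    trace (M)⁻¹ ≤ 1 / lam * ∑ p, ∑ q, (X * Aᵀ - 1 : Matrix m m ℝ) p q ^ 2 + ∑ i, mu i := by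
  set B := (M)⁻¹
  set Y := X * Aᵀ - 1
  have hBt : Bᵀ = B := transpose_inv_mul_diagonal_mul_transpose_add_smul_one A hx hlam
  have hcols : 2 * trace (X * (B * A)ᵀ) - trace (B * A * diagonal x * (B * A)ᵀ) ≤ ∑ i, mu i := by
    rw [trace_mul_transpose_eq_sum_dotProduct, trace_mul_diagonal_mul_transpose, Finset.mul_sum,
      ← Finset.sum_sub_distrib]
    exact Finset.sum_le_sum fun i _ =>
      two_mul_dotProduct_sub_le (hx i) (hmu i) (by simpa [dotProduct, sq] using hX i)
  have hcross : trace (X * (B * A)ᵀ) = trace (Y * B) + trace B := by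
    rw [transpose_mul, hBt, ← Matrix.mul_assoc, show X * Aᵀ = Y + 1 by simp [Y], add_mul,
      Matrix.one_mul, trace_add]
  have hsq : 0 ≤ trace (Y * Yᵀ) + 2 * lam * trace (Y * B) + lam ^ 2 * trace (B * B) := by
    rw [← trace_add_smul_mul_transpose_add_smul hBt, ← sum_sq_eq_trace_mul_transpose]
    positivity
  rw [hcross, trace_inv_mul_mul_diagonal_mul_transpose A hx hlam] at hcols
  have hmain : lam * (trace B - ∑ i, mu i) ≤ trace (Y * Yᵀ) := by
    nlinarith [mul_le_mul_of_nonneg_left hcols hlam.le]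
  rw [sum_sq_eq_trace_mul_transpose, one_div_mul_eq_div]
  linarith [(le_div_iff₀' hlam).2 hmain]

theorem exists_sum_sq_div_add_sum_eq_trace_inv (hx : 0 ≤ x) (hlam : 0 < lam) :
    ∃ (X : Matrix m ι ℝ) (mu : ι → ℝ), (∀ i, 0 ≤ mu i) ∧ (∀ i, ∑ j, X j i ^ 2 ≤ mu i * x i) ∧
      1 / lam * ∑ p, ∑ q, (X * Aᵀ - 1 : Matrix m m ℝ) p q ^ 2 + ∑ i, mu i = trace (M)⁻¹ := by
  set B := (M)⁻¹
  have hBt : Bᵀ = B := transpose_inv_mul_diagonal_mul_transpose_add_smul_one A hx hlam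
  refine ⟨B * A * diagonal x, fun i => x i * ((B * A)ᵀ i ⬝ᵥ (B * A)ᵀ i),
    fun i => mul_nonneg (hx i) (by simpa using dotProduct_star_self_nonneg ((B * A)ᵀ i)),
    fun i => le_of_eq ?_, ?_⟩
  · simp only [mul_diagonal, dotProduct, transpose_apply, mul_pow, Finset.mul_sum, Finset.sum_mul]
    exact Finset.sum_congr rfl fun _ _ => by ring
  · have hres : B * A * diagonal x * Aᵀ - 1 = -lam • B := by
      rw [show B * A * diagonal x * Aᵀ = B * (A * diagonal x * Aᵀ) by simp [Matrix.mul_assoc],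
        inv_mul_mul_diagonal_mul_transpose A hx hlam, sub_sub_cancel_left, neg_smul]
    rw [hres, ← trace_mul_diagonal_mul_transpose,
      trace_inv_mul_mul_diagonal_mul_transpose A hx hlam, sum_sq_eq_trace_mul_transpose,
      transpose_smul, hBt, Matrix.smul_mul, Matrix.mul_smul, trace_smul, trace_smul, smul_eq_mul,
      smul_eq_mul]
    field_simp
    ring

theorem isLeast_trace_inv (hx : 0 ≤ x) (hlam : 0 < lam) :
    IsLeast {r | ∃ (X : Matrix m ι ℝ) (mu : ι → ℝ), (∀ i, 0 ≤ mu i) ∧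
      (∀ i, ∑ j, X j i ^ 2 ≤ mu i * x i) ∧
      1 / lam * ∑ p, ∑ q, (X * Aᵀ - 1 : Matrix m m ℝ) p q ^ 2 + ∑ i, mu i = r} (trace (M)⁻¹) :=
  ⟨exists_sum_sq_div_add_sum_eq_trace_inv A hx hlam, by
    rintro _ ⟨X, mu, hmu, hX, rfl⟩
    exact trace_inv_le_sum_sq_div_add_sum A hx hlam hmu hX⟩

end InnerProblem

theorem Finset.exists_eq_ite_mem_of_forall_eq_zero_or_eq_one {ι : Type*} [Fintype ι]
    [DecidableEq ι] {x : ι → ℝ} (hx : ∀ i, x i = 0 ∨ x i = 1) :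
    ∃ S : Finset ι, x = fun i => if i ∈ S then 1 else 0 :=
  ⟨univ.filter (x · = 1), funext fun i => by rcases hx i with h | h <;> simp [h]⟩

section FinIndexed

variable {d n : ℕ} (a : Fin n → Fin d → ℝ) (lam : ℝ)

theorem contM_eq_mul_diagonal_mul_transpose_add_smul_one (x : Fin n → ℝ) :
    contM d n a lam x = Amat d n a * diagonal x * (Amat d n a)ᵀ + lam • 1 := by
  rw [contM]
  congr 1
  ext p q
  simp only [mul_apply, diagonal_apply, mul_ite, mul_zero, Finset.sum_ite_eq', Finset.mem_univ,
    if_true, Amat, transpose_apply, of_apply, Matrix.sum_apply, vecMulVec_apply,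
    Matrix.smul_apply, smul_eq_mul]
  exact Finset.sum_congr rfl fun _ _ => by ring

theorem contM_ite_mem (S : Finset (Fin n)) :
    contM d n a lam (fun i => if i ∈ S then 1 else 0) = infoM d n a lam S := by
  simp only [contM, infoM, ite_smul, one_smul, zero_smul, Finset.sum_ite_mem, univ_inter]

end FinIndexed

theorem stmt7_general (d n : ℕ)
    (a : Fin n → Fin d → ℝ) (lam : ℝ) (hlam : 0 < lam)
    (k : ℕ) :
    zk d n a lam k =
      sInf {r : ℝ | ∃ x : Fin n → ℝ, ∃ X : Matrix (Fin d) (Fin n) ℝ, ∃ mu : Fin n → ℝ,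
        (∀ i, x i = 0 ∨ x i = 1) ∧ (∀ i, 0 ≤ mu i) ∧
        (∀ i, (∑ j, (X j i) ^ 2) ≤ mu i * x i) ∧ (∑ i, x i) = (k : ℝ) ∧
        (1 / lam) * fro2 (X * (Amat d n a)ᵀ - (1 : Matrix (Fin d) (Fin d) ℝ)) +
          (∑ i, mu i) = r} ∧
    nuC d n a lam k =
      sInf {r : ℝ | ∃ x : Fin n → ℝ, ∃ X : Matrix (Fin d) (Fin n) ℝ, ∃ mu : Fin n → ℝ,
        (∀ i, 0 ≤ x i ∧ x i ≤ 1) ∧ (∀ i, 0 ≤ mu i) ∧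
        (∀ i, (∑ j, (X j i) ^ 2) ≤ mu i * x i) ∧ (∑ i, x i) = (k : ℝ) ∧
        (1 / lam) * fro2 (X * (Amat d n a)ᵀ - (1 : Matrix (Fin d) (Fin d) ℝ)) +
          (∑ i, mu i) = r} := by
  have hinner (x : Fin n → ℝ) (hx : 0 ≤ x) : IsLeast {r | ∃ (X : Matrix (Fin d) (Fin n) ℝ)
      (mu : Fin n → ℝ), (∀ i, 0 ≤ mu i) ∧ (∀ i, ∑ j, X j i ^ 2 ≤ mu i * x i) ∧
      1 / lam * fro2 (X * (Amat d n a)ᵀ - 1) + ∑ i, mu i = r} (trace (contM d n a lam x)⁻¹) := by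
    rw [contM_eq_mul_diagonal_mul_transpose_add_smul_one]
    exact isLeast_trace_inv _ hx hlam
  constructor
  · refine csInf_eq_csInf_of_forall_exists_le ?_ ?_
    · rintro _ ⟨S, rfl, rfl⟩
      obtain ⟨X, mu, hmu, hX, hval⟩ :=
        (hinner (fun i => if i ∈ S then 1 else 0) fun i => by positivity).1
      refine ⟨_, ⟨_, X, mu, fun i => by split_ifs <;> simp, hmu, hX, by simp, hval⟩, ?_⟩
      rw [fS, contM_ite_mem]
    · rintro _ ⟨x, X, mu, hx, hmu, hX, hsum, rfl⟩
      obtain ⟨S, rfl⟩ := Finset.exists_eq_ite_mem_of_forall_eq_zero_or_eq_one hx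
      refine ⟨_, ⟨S, by simpa using hsum, rfl⟩, ?_⟩
      rw [fS, ← contM_ite_mem]
      exact (hinner _ fun i => by positivity).2 ⟨X, mu, hmu, hX, rfl⟩
  · refine csInf_eq_csInf_of_forall_exists_le ?_ ?_
    · rintro _ ⟨x, hx, hsum, rfl⟩
      obtain ⟨X, mu, hmu, hX, hval⟩ := (hinner x fun i => (hx i).1).1
      exact ⟨_, ⟨x, X, mu, hx, hmu, hX, hsum, hval⟩, le_rfl⟩
    · rintro _ ⟨x, X, mu, hx, hmu, hX, hsum, rfl⟩
      exact ⟨_, ⟨x, hx, hsum, rfl⟩, (hinner x fun i => (hx i).1).2 ⟨X, mu, hmu, hX, rfl⟩⟩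

theorem stmt7 (d n : ℕ) (hd : 1 ≤ d) (hdn : d ≤ n)
    (a : Fin n → Fin d → ℝ) (lam : ℝ) (hlam : 0 < lam)
    (k : ℕ) (hk1 : 1 ≤ k) (hkn : k ≤ n) :
    zk d n a lam k =
      sInf {r : ℝ | ∃ x : Fin n → ℝ, ∃ X : Matrix (Fin d) (Fin n) ℝ, ∃ mu : Fin n → ℝ,
        (∀ i, x i = 0 ∨ x i = 1) ∧ (∀ i, 0 ≤ mu i) ∧
        (∀ i, (∑ j, (X j i) ^ 2) ≤ mu i * x i) ∧ (∑ i, x i) = (k : ℝ) ∧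
        (1 / lam) * fro2 (X * (Amat d n a)ᵀ - (1 : Matrix (Fin d) (Fin d) ℝ)) +
          (∑ i, mu i) = r} ∧
    nuC d n a lam k =
      sInf {r : ℝ | ∃ x : Fin n → ℝ, ∃ X : Matrix (Fin d) (Fin n) ℝ, ∃ mu : Fin n → ℝ,
        (∀ i, 0 ≤ x i ∧ x i ≤ 1) ∧ (∀ i, 0 ≤ mu i) ∧
        (∀ i, (∑ j, (X j i) ^ 2) ≤ mu i * x i) ∧ (∑ i, x i) = (k : ℝ) ∧
        (1 / lam) * fro2 (X * (Amat d n a)ᵀ - (1 : Matrix (Fin d) (Fin d) ℝ)) +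
          (∑ i, mu i) = r} :=
  stmt7_general d n a lam hlam k
end

section
/- Let s be an integer with d ≤ s ≤ n, let σ₁ ≥ ... ≥ σ_d ≥ 0 be nonnegative reals, and let η (0 ≤ η ≤ k̃−1) be the unique integer satisfying σ_η > (1/(k̃−η))·Σ_{i=η+1}^{d} σ_i ≥ σ_{η+1} (with σ₀ = ∞). Define σ⁺ ∈ ℝ₊^s by σ⁺_i = σ_i + λ for 1 ≤ i ≤ k̃, σ⁺_i = σ_i for k̃ < i ≤ d, and σ⁺_i = 0 for d < i ≤ s. Then the same index η satisfies σ⁺_η > (1/(k̃−η))·Σ_{i=η+1}^{s} σ⁺_i ≥ σ⁺_{η+1}. -/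
open Matrix Finset

noncomputable section

open Classical in
/-- The eigenvalues of a symmetric matrix, listed in decreasing order with multiplicity
(and junk value `0` if the matrix is not symmetric). -/
def eigsDesc {d : ℕ} (X : Matrix (Fin d) (Fin d) ℝ) : Fin d → ℝ :=
  if h : X.IsHermitian then (fun i => (h.eigenvalues ∘ Tuple.sort h.eigenvalues) i.rev)
  else fun _ => 0

/-- `idxVal σ j` is `σ_{j+1}` in one-based indexing (junk value `0` out of range). -/
def idxVal {m : ℕ} (σ : Fin m → ℝ) (j : ℕ) : ℝ := if h : j < m then σ ⟨j, h⟩ else 0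

/-- `Σ_{i = η+1}^{m} σ_i` in one-based indexing. -/
def tailSum (m : ℕ) (σ : Fin m → ℝ) (η : ℕ) : ℝ :=
  ∑ i ∈ Finset.univ.filter (fun i : Fin m => η ≤ (i : ℕ)), σ i

/-- `η` is an integer with `0 ≤ η ≤ k-1` such that
`σ_η > (1/(k-η)) Σ_{i=η+1}^{m} σ_i ≥ σ_{η+1}` (one-based indexing, convention `σ_0 = ∞`). -/
def isEnvIdx (m k : ℕ) (σ : Fin m → ℝ) (η : ℕ) : Prop :=
  η < k ∧ η < m ∧
  (η = 0 ∨ tailSum m σ η / ((k : ℝ) - η) < idxVal σ (η - 1)) ∧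
  idxVal σ η ≤ tailSum m σ η / ((k : ℝ) - η)

/-- `Σ_{i=1}^{η} 1/(σ_i + λ) + (k-η)² / (Σ_{i=η+1}^{m} σ_i + (k-η)λ)`. -/
def envVal (m k : ℕ) (lam : ℝ) (σ : Fin m → ℝ) (η : ℕ) : ℝ :=
  (∑ i ∈ Finset.univ.filter (fun i : Fin m => (i : ℕ) < η), 1 / (σ i + lam)) +
    ((k : ℝ) - η) ^ 2 / (tailSum m σ η + ((k : ℝ) - η) * lam)

open Classical in
/-- The function `G(X; λ)` (the convex envelope of `Γ(·;λ)`), defined via the unique index `η`;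
with `lam = 0`, `d = n` and `kt = k`, this is the function `Φ`. -/
def Gfun (d kt : ℕ) (lam : ℝ) (X : Matrix (Fin d) (Fin d) ℝ) : ℝ :=
  if h : ∃ η, isEnvIdx d kt (eigsDesc X) η then envVal d kt lam (eigsDesc X) h.choose
  else 0

end


theorem stmt10 (d n k : ℕ) (hd : 1 ≤ d) (hdn : d ≤ n) (hk1 : 1 ≤ k) (hkn : k ≤ n)
    (lam : ℝ) (hlam : 0 < lam)
    (s : ℕ) (hds : d ≤ s) (hsn : s ≤ n)
    (σ : Fin d → ℝ) (hmono : Antitone σ) (hnonneg : ∀ i, 0 ≤ σ i)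
    (η : ℕ) (hη : isEnvIdx d (min k d) σ η)
    (σp : Fin s → ℝ)
    (hσp1 : ∀ (i : Fin s) (h : (i : ℕ) < d), (i : ℕ) < min k d → σp i = σ ⟨i, h⟩ + lam)
    (hσp2 : ∀ (i : Fin s) (h : (i : ℕ) < d), min k d ≤ (i : ℕ) → σp i = σ ⟨i, h⟩)
    (hσp3 : ∀ i : Fin s, d ≤ (i : ℕ) → σp i = 0) :
    isEnvIdx s (min k d) σp η := by
  obtain ⟨hηk, hηd, hcond1, hcond2⟩ := hη
  have hktd : min k d ≤ d := min_le_right k d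
  have hηs : η < s := lt_of_lt_of_le hηd hds
  have hc : (0:ℝ) < ((min k d : ℕ):ℝ) - η := by
    have : (η:ℝ) < (min k d : ℕ) := by exact_mod_cast hηk
    linarith
  have key : ∀ (m : ℕ) (f : Fin m → ℝ),
      tailSum m f η = ∑ j ∈ Finset.Ico η m, idxVal f j := by
    intro m f
    rw [tailSum, Finset.sum_filter]
    have h1 : ∀ i : Fin m, (if η ≤ (i:ℕ) then f i else 0)
        = (fun j => if η ≤ j then idxVal f j else 0) (i:ℕ) := by
      intro i
      simp only [idxVal, i.isLt, dif_pos, Fin.eta]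
    rw [Finset.sum_congr rfl (fun i _ => h1 i),
      Fin.sum_univ_eq_sum_range (fun j => if η ≤ j then idxVal f j else 0) m]
    rw [← Finset.sum_filter]
    congr 1
    ext j
    simp only [Finset.mem_filter, Finset.mem_Ico, Finset.mem_range]
    tauto
  have hIco : Finset.Ico η s = Finset.Ico η d ∪ Finset.Ico d s :=
    (Finset.Ico_union_Ico_eq_Ico (le_of_lt hηd) hds).symm
  have hsum : tailSum s σp η = tailSum d σ η + (((min k d : ℕ):ℝ) - η) * lam := by
    rw [key s σp, key d σ, hIco,
      Finset.sum_union (Finset.Ico_disjoint_Ico_consecutive η d s)]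
    have hz : ∑ j ∈ Finset.Ico d s, idxVal σp j = 0 := by
      apply Finset.sum_eq_zero
      intro j hj
      rw [Finset.mem_Ico] at hj
      rw [idxVal]
      split
      · exact hσp3 ⟨j, ‹_›⟩ hj.1
      · rfl
    rw [hz, add_zero]
    have hmain : ∑ j ∈ Finset.Ico η d, idxVal σp j
        = ∑ j ∈ Finset.Ico η d, (idxVal σ j + if j < min k d then lam else 0) := by
      apply Finset.sum_congr rfl
      intro j hj
      rw [Finset.mem_Ico] at hj
      have hjd : j < d := hj.2
      have hjs : j < s := lt_of_lt_of_le hjd hds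
      rw [idxVal, dif_pos hjs, idxVal, dif_pos hjd]
      by_cases hjk : j < min k d
      · rw [if_pos hjk, hσp1 ⟨j, hjs⟩ hjd hjk]
      · rw [if_neg hjk, hσp2 ⟨j, hjs⟩ hjd (le_of_not_gt hjk), add_zero]
    rw [hmain, Finset.sum_add_distrib]
    congr 1
    rw [← Finset.sum_filter]
    have hfil : (Finset.Ico η d).filter (fun j => j < min k d) = Finset.Ico η (min k d) := by
      ext j
      simp only [Finset.mem_filter, Finset.mem_Ico]
      omega
    rw [hfil, Finset.sum_const, Nat.card_Ico, nsmul_eq_mul]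
    congr 1
    have : η ≤ min k d := le_of_lt hηk
    push_cast [Nat.cast_sub this]
    ring
  have hdiv : tailSum s σp η / (((min k d : ℕ):ℝ) - η)
      = tailSum d σ η / (((min k d : ℕ):ℝ) - η) + lam := by
    rw [hsum, add_div, mul_div_cancel_left₀ _ (ne_of_gt hc)]
  refine ⟨hηk, hηs, ?_, ?_⟩
  · rcases hcond1 with h0 | hlt
    · exact Or.inl h0
    · right
      have hη1k : η - 1 < min k d := lt_of_le_of_lt (Nat.sub_le _ _) hηk
      have hη1d : η - 1 < d := lt_of_lt_of_le hη1k hktd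
      have hη1s : η - 1 < s := lt_of_lt_of_le hη1d hds
      have e1 : idxVal σp (η - 1) = σ ⟨η - 1, hη1d⟩ + lam := by
        rw [idxVal, dif_pos hη1s, hσp1 ⟨η - 1, hη1s⟩ hη1d hη1k]
      have e2 : idxVal σ (η - 1) = σ ⟨η - 1, hη1d⟩ := by
        rw [idxVal, dif_pos hη1d]
      rw [e1, hdiv]
      rw [e2] at hlt
      linarith
  · have hηkd : η < min k d := hηk
    have e1 : idxVal σp η = σ ⟨η, hηd⟩ + lam := by
      rw [idxVal, dif_pos hηs, hσp1 ⟨η, hηs⟩ hηd hηkd]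
    have e2 : idxVal σ η = σ ⟨η, hηd⟩ := by
      rw [idxVal, dif_pos hηd]
    rw [e1, hdiv]
    rw [e2] at hcond2
    linarith
end

section
/- The relaxation values satisfy: (i) ν_k^N = ν_k^C for every k with d ≤ k ≤ n; and (ii) ν_k^N ≥ ν_k^C for every k with 1 ≤ k ≤ d−1. -/
open Matrix Finset

noncomputable section


/-- The relaxation value `ν_k^N`. -/
def nuN (d n : ℕ) (a : Fin n → Fin d → ℝ) (lam : ℝ) (k : ℕ) : ℝ :=
  sInf {r : ℝ | ∃ x : Fin n → ℝ, (∀ i, 0 ≤ x i ∧ x i ≤ 1) ∧ (∑ i, x i) = (k : ℝ) ∧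
    Gfun d (min k d) lam (∑ i : Fin n, x i • Matrix.vecMulVec (a i) (a i)) +
      ((d : ℝ) - (min k d : ℕ)) / lam = r}

end

/-!
For positive semidefinite `X` with eigenvalues `σ₁ ≥ ⋯ ≥ σ_d`, `tr (X + λI)⁻¹ = Σ 1 / (σᵢ + λ)`.
By the choice of `η`, every tail eigenvalue `σᵢ` (`i > η`) lies in `[0, t / (k̃ - η)]`, where `t` is
the tail sum. Bounding the convex function `s ↦ 1 / (s + λ)` on that interval by its chord and
summing gives `tr (X + λI)⁻¹ ≤ G(X; λ) + (d - k̃) / λ`, so the objective of `ν_k^C` lies pointwise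
below that of `ν_k^N`. When `k̃ = d`, Cauchy–Schwarz bounds the tail sum from below by the same
quantity, the two objectives agree and so do the relaxation values.
-/

namespace Matrix.IsHermitian

variable {ι : Type*} [Fintype ι] [DecidableEq ι] {X : Matrix ι ι ℝ}

theorem trace_inv_add_smul_one (hX : X.IsHermitian) {lam : ℝ}
    (hpos : ∀ i, hX.eigenvalues i + lam ≠ 0) :
    trace (X + lam • (1 : Matrix ι ι ℝ))⁻¹ = ∑ i, (hX.eigenvalues i + lam)⁻¹ := by
  set φ := Unitary.conjStarAlgAut ℝ (Matrix ι ι ℝ) hX.eigenvectorUnitary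
  have hdiag : X + lam • (1 : Matrix ι ι ℝ) = φ (diagonal fun i => hX.eigenvalues i + lam) := by
    conv_lhs => rw [hX.spectral_theorem]
    rw [← diagonal_add, ← smul_one_eq_diagonal, map_add, map_smul, map_one]
    simp [φ]
  have hinv : (X + lam • (1 : Matrix ι ι ℝ))⁻¹ =
      φ (diagonal fun i => (hX.eigenvalues i + lam)⁻¹) := by
    refine inv_eq_right_inv ?_
    rw [hdiag, ← map_mul, diagonal_mul_diagonal, ← map_one φ]
    congr
    simp [mul_inv_cancel₀ (hpos _)]
  rw [hinv, Unitary.conjStarAlgAut_apply, trace_mul_cycle, Unitary.coe_star_mul_self, one_mul,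
    trace_diagonal]

end Matrix.IsHermitian

section eigsDesc

variable {d : ℕ} {X : Matrix (Fin d) (Fin d) ℝ}

theorem eigsDesc_eq (hX : X.IsHermitian) :
    eigsDesc X = hX.eigenvalues ∘ (Fin.revPerm.trans (Tuple.sort hX.eigenvalues)) := by
  rw [eigsDesc, dif_pos hX]
  rfl

theorem eigsDesc_antitone (hX : X.IsHermitian) : Antitone (eigsDesc X) := fun _ _ hij => by
  rw [eigsDesc_eq hX]
  exact Tuple.monotone_sort hX.eigenvalues (Fin.rev_le_rev.mpr hij)

theorem eigsDesc_nonneg (hX : X.PosSemidef) (i : Fin d) : 0 ≤ eigsDesc X i := by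
  rw [eigsDesc_eq hX.isHermitian]
  exact hX.eigenvalues_nonneg _

theorem sum_comp_eigsDesc (hX : X.IsHermitian) (g : ℝ → ℝ) :
    ∑ i, g (eigsDesc X i) = ∑ i, g (hX.eigenvalues i) := by
  rw [eigsDesc_eq hX]
  exact Equiv.sum_comp _ (g ∘ hX.eigenvalues)

theorem trace_inv_add_smul_one_eq_sum_eigsDesc (hX : X.PosSemidef) {lam : ℝ} (hlam : 0 < lam) :
    trace (X + lam • (1 : Matrix (Fin d) (Fin d) ℝ))⁻¹ = ∑ i, 1 / (eigsDesc X i + lam) := by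
  simp only [one_div]
  rw [hX.isHermitian.trace_inv_add_smul_one fun i => by
      linarith [hX.eigenvalues_nonneg i],
    sum_comp_eigsDesc hX.isHermitian fun s => (s + lam)⁻¹]

end eigsDesc

section envelope

variable {m k : ℕ} {σ : Fin m → ℝ} {lam : ℝ}

theorem tailSum_eq_add_tailSum_succ {j : ℕ} (hj : j < m) :
    tailSum m σ j = σ ⟨j, hj⟩ + tailSum m σ (j + 1) := by
  have h : univ.filter (fun i : Fin m => j ≤ (i : ℕ)) =
      insert ⟨j, hj⟩ (univ.filter fun i : Fin m => j + 1 ≤ (i : ℕ)) := by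
    ext i
    simp only [mem_filter, mem_univ, true_and, mem_insert, Fin.ext_iff]
    omega
  rw [tailSum, tailSum, h, sum_insert (by simp)]

theorem tailSum_nonneg (hσ : 0 ≤ σ) (η : ℕ) : 0 ≤ tailSum m σ η :=
  sum_nonneg fun i _ => hσ i

theorem card_filter_le_val (m η : ℕ) : #(univ.filter fun i : Fin m => η ≤ (i : ℕ)) = m - η := by
  rw [card_filter, Fin.sum_univ_eq_sum_range (fun i => if η ≤ i then 1 else 0), ← card_filter]
  have h : (range m).filter (fun i => η ≤ i) = Ico η m := by
    ext i
    simp only [mem_filter, mem_range, mem_Ico]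
    omega
  rw [h, Nat.card_Ico]

theorem sum_eq_sum_lt_add_sum_le (η : ℕ) (f : Fin m → ℝ) :
    ∑ i, f i = ∑ i ∈ univ.filter (fun i : Fin m => (i : ℕ) < η), f i +
      ∑ i ∈ univ.filter (fun i : Fin m => η ≤ (i : ℕ)), f i := by
  simp_rw [← sum_filter_add_sum_filter_not univ (fun i : Fin m => (i : ℕ) < η) f, not_lt]

theorem exists_isEnvIdx (hk : 1 ≤ k) (hkm : k ≤ m) (hσ : 0 ≤ σ) : ∃ η, isEnvIdx m k σ η := by
  classical
  -- `η` is the least `j < k` with `(k - j) σ_{j+1} ≤ Σ_{i > j} σ_i`; `j = k - 1` qualifies.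
  have hP : ∃ j, j < k ∧ ((k : ℝ) - j) * idxVal σ j ≤ tailSum m σ j := by
    refine ⟨k - 1, by omega, ?_⟩
    have hts := tailSum_eq_add_tailSum_succ (σ := σ) (j := k - 1) (by omega)
    rw [Nat.sub_add_cancel hk] at hts
    rw [idxVal, dif_pos (by omega), hts]
    push_cast [Nat.cast_sub hk]
    linarith [tailSum_nonneg hσ k]
  obtain ⟨hηk, hle⟩ := Nat.find_spec hP
  set η := Nat.find hP
  have hkη : (0 : ℝ) < k - η := sub_pos.mpr (by exact_mod_cast hηk)
  refine ⟨η, hηk, by omega, ?_, (le_div_iff₀ hkη).mpr (by linarith)⟩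
  rcases Nat.eq_zero_or_pos η with h0 | h0
  · exact Or.inl h0
  · right
    have hprev := Nat.find_min hP (m := η - 1) (by omega)
    push Not at hprev
    have hts := tailSum_eq_add_tailSum_succ (σ := σ) (j := η - 1) (by omega)
    rw [Nat.sub_add_cancel h0] at hts
    specialize hprev (by omega)
    rw [idxVal, dif_pos (by omega), hts] at hprev
    push_cast [Nat.cast_sub h0] at hprev
    rw [idxVal, dif_pos (by omega), div_lt_iff₀ hkη]
    nlinarith

-- `s ↦ 1 / (s + λ)` is convex, so on `[0, t / p]` it lies below its chord.
theorem one_div_add_le_chord {s t p : ℝ} (hlam : 0 < lam) (hs : 0 ≤ s) (hp : 0 < p)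
    (hst : p * s ≤ t) : 1 / (s + lam) ≤ 1 / lam - s * p / (lam * (t + p * lam)) := by
  have hsl : 0 < s + lam := by linarith
  have htp : 0 < t + p * lam := by nlinarith
  rw [div_sub_div _ _ hlam.ne' (by positivity), div_le_div_iff₀ hsl (by positivity)]
  nlinarith [mul_nonneg (mul_nonneg hs (sub_nonneg.mpr hst)) (mul_pos hlam htp).le]

theorem sum_le_envVal_add (hlam : 0 < lam) (hσ : 0 ≤ σ) (hanti : Antitone σ) {η : ℕ}
    (hη : isEnvIdx m k σ η) :
    ∑ i, 1 / (σ i + lam) ≤ envVal m k lam σ η + ((m : ℝ) - k) / lam := by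
  obtain ⟨hηk, hηm, -, hle⟩ := hη
  set T := univ.filter fun i : Fin m => η ≤ (i : ℕ)
  set p : ℝ := (k : ℝ) - η
  set t := tailSum m σ η
  have hp : 0 < p := sub_pos.mpr (by exact_mod_cast hηk)
  have hpσ : p * σ ⟨η, hηm⟩ ≤ t := by
    rw [idxVal, dif_pos hηm, le_div_iff₀ hp] at hle
    linarith
  have htail : ∑ i ∈ T, 1 / (σ i + lam) ≤ ∑ i ∈ T, (1 / lam - σ i * p / (lam * (t + p * lam))) :=
    sum_le_sum fun i hi => one_div_add_le_chord hlam (hσ i) hp <|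
      (mul_le_mul_of_nonneg_left (hanti (mem_filter.mp hi).2) hp.le).trans hpσ
  have hchords : ∑ i ∈ T, (1 / lam - σ i * p / (lam * (t + p * lam))) =
      p ^ 2 / (t + p * lam) + ((m : ℝ) - k) / lam := by
    have htp : 0 < t + p * lam := by linarith [tailSum_nonneg hσ η, mul_pos hp hlam]
    rw [sum_sub_distrib, sum_const, nsmul_eq_mul, card_filter_le_val, ← sum_div, ← sum_mul]
    change _ - t * p / _ = _
    push_cast [Nat.cast_sub hηm.le]
    rw [show (m : ℝ) - η = m - k + p by ring]
    field_simp
    ring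
  rw [sum_eq_sum_lt_add_sum_le η, envVal]
  linarith

-- The tail term of `envVal` is the Cauchy–Schwarz lower bound for the tail sum.
theorem envVal_self_le_sum {η : ℕ} (hη : η ≤ m) (hpos : ∀ i, 0 < σ i + lam) :
    envVal m m lam σ η ≤ ∑ i, 1 / (σ i + lam) := by
  have := sq_sum_div_le_sum_sq_div (univ.filter fun i : Fin m => η ≤ (i : ℕ)) (fun _ => (1 : ℝ))
    (fun i _ => hpos i)
  rw [sum_eq_sum_lt_add_sum_le η, envVal]
  simp only [sum_const, card_filter_le_val, sum_add_distrib, nsmul_eq_mul, mul_one, one_pow] at this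
  push_cast [Nat.cast_sub hη] at this
  exact add_le_add_right this _

end envelope

section Gfun

variable {d k : ℕ} {lam : ℝ} {X : Matrix (Fin d) (Fin d) ℝ}

theorem exists_isEnvIdx_and_Gfun_eq (hX : X.PosSemidef) (hk : 1 ≤ k) (hkd : k ≤ d) :
    ∃ η, isEnvIdx d k (eigsDesc X) η ∧ Gfun d k lam X = envVal d k lam (eigsDesc X) η := by
  have hex := exists_isEnvIdx hk hkd (eigsDesc_nonneg hX)
  exact ⟨hex.choose, hex.choose_spec, by rw [Gfun, dif_pos hex]⟩

theorem trace_inv_add_smul_one_le_Gfun (hX : X.PosSemidef) (hlam : 0 < lam) (hk : 1 ≤ k)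
    (hkd : k ≤ d) :
    trace (X + lam • (1 : Matrix (Fin d) (Fin d) ℝ))⁻¹ ≤ Gfun d k lam X + ((d : ℝ) - k) / lam := by
  obtain ⟨η, hη, hG⟩ := exists_isEnvIdx_and_Gfun_eq (lam := lam) hX hk hkd
  rw [trace_inv_add_smul_one_eq_sum_eigsDesc hX hlam, hG]
  exact sum_le_envVal_add hlam (eigsDesc_nonneg hX) (eigsDesc_antitone hX.isHermitian) hη

theorem Gfun_self_eq_trace_inv (hX : X.PosSemidef) (hlam : 0 < lam) (hd : 1 ≤ d) :
    Gfun d d lam X = trace (X + lam • (1 : Matrix (Fin d) (Fin d) ℝ))⁻¹ := by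
  obtain ⟨η, hη, hG⟩ := exists_isEnvIdx_and_Gfun_eq (lam := lam) hX hd le_rfl
  rw [trace_inv_add_smul_one_eq_sum_eigsDesc hX hlam, hG]
  refine le_antisymm (envVal_self_le_sum hη.2.1.le fun i => by linarith [eigsDesc_nonneg hX i]) ?_
  simpa using sum_le_envVal_add hlam (eigsDesc_nonneg hX) (eigsDesc_antitone hX.isHermitian) hη

end Gfun

section relaxation

def relaxFeasible (n k : ℕ) : Set (Fin n → ℝ) :=
  {x | (∀ i, 0 ≤ x i ∧ x i ≤ 1) ∧ ∑ i, x i = k}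

variable {d n : ℕ} (a : Fin n → Fin d → ℝ) (lam : ℝ) (k : ℕ)

theorem nuC_eq_iInf : nuC d n a lam k = ⨅ x : relaxFeasible n k, trace (contM d n a lam x)⁻¹ := by
  rw [nuC, iInf]
  congr 1
  ext r
  simp [relaxFeasible, and_assoc]

theorem nuN_eq_iInf :
    nuN d n a lam k = ⨅ x : relaxFeasible n k,
      Gfun d (min k d) lam (∑ i, x.1 i • vecMulVec (a i) (a i)) + ((d : ℝ) - (min k d : ℕ)) / lam := by
  rw [nuN, iInf]
  congr 1
  ext r
  simp [relaxFeasible, and_assoc]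

theorem posSemidef_sum_smul_vecMulVec {x : Fin n → ℝ} (hx : 0 ≤ x) :
    (∑ i, x i • vecMulVec (a i) (a i)).PosSemidef :=
  posSemidef_sum _ fun i _ => by simpa using (posSemidef_vecMulVec_self_star (a i)).smul (hx i)

end relaxation

theorem stmt15_general (d n : ℕ) (hd : 1 ≤ d)
    (a : Fin n → Fin d → ℝ) (lam : ℝ) (hlam : 0 < lam)
    (k : ℕ) (hk1 : 1 ≤ k) :
    (d ≤ k → nuN d n a lam k = nuC d n a lam k) ∧
    (k < d → nuC d n a lam k ≤ nuN d n a lam k) := by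
  have hpsd (x : relaxFeasible n k) : (∑ i, x.1 i • vecMulVec (a i) (a i)).PosSemidef :=
    posSemidef_sum_smul_vecMulVec a fun i => (x.2.1 i).1
  rw [nuN_eq_iInf, nuC_eq_iInf]
  refine ⟨fun hdk => ?_, fun hkd => ?_⟩
  · rw [min_eq_right hdk, sub_self, zero_div]
    congr 1 with x
    rw [add_zero, Gfun_self_eq_trace_inv (hpsd x) hlam hd]
    rfl
  · rw [min_eq_left hkd.le]
    refine ciInf_mono ⟨0, ?_⟩ fun x => trace_inv_add_smul_one_le_Gfun (hpsd x) hlam hk1 hkd.le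
    rintro _ ⟨x, rfl⟩
    dsimp only [contM]
    rw [trace_inv_add_smul_one_eq_sum_eigsDesc (hpsd x) hlam]
    exact sum_nonneg fun i _ => by have := eigsDesc_nonneg (hpsd x) i; positivity

theorem stmt15 (d n : ℕ) (hd : 1 ≤ d) (hdn : d ≤ n)
    (a : Fin n → Fin d → ℝ) (lam : ℝ) (hlam : 0 < lam)
    (k : ℕ) (hk1 : 1 ≤ k) (hkn : k ≤ n) :
    (d ≤ k → nuN d n a lam k = nuC d n a lam k) ∧
    (k < d → nuC d n a lam k ≤ nuN d n a lam k) :=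
  stmt15_general d n hd a lam hlam k hk1
end

section
/- Suppose d ≤ k ≤ n, and let S^{(n)} ⊋ S^{(n−1)} ⊋ ... ⊋ S^{(k)} be any decreasing chain of subsets of {1,...,n} with S^{(n)} = {1,...,n}, |S^{(j)}| = j for each j, and such that for each j ∈ {k+1,...,n}, S^{(j−1)} = S^{(j)} ∖ {i_j} where i_j minimizes f(S^{(j)} ∖ {i}) over i ∈ S^{(j)} (backward greedy removal). Then f(S^{(k)}) ≤ ((n−d+1)/(k−d+1))·z_k. -/
open Matrix Finset

/-!
For `M = infoM S`, `tᵢ = aᵢᵀ M⁻¹ aᵢ < 1` and `rᵢ = aᵢᵀ M⁻² aᵢ`, Sherman–Morrison gives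
`f(S ∖ {i}) = f(S) + rᵢ / (1 - tᵢ)`. Moreover `∑ tᵢ = d - λ f(S)` and `∑ rᵢ ≤ f(S)`, so the
greedy increment `g` satisfies `g (|S| - d) ≤ ∑ g (1 - tᵢ) ≤ ∑ rᵢ ≤ f(S)`, that is
`(|S| - d) f(S ∖ {i}) ≤ (|S| - d + 1) f(S)`. Thus `(j - d + 1) f(S⁽ʲ⁾)` grows with `j` along the
chain, and `f({1,…,n}) ≤ z_k` because `f` is antitone.
-/

namespace Matrix

variable {m : Type*} [Fintype m]

theorem inv_add_vecMulVec {α : Type*} [Field α] [DecidableEq m] {N : Matrix m m α}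
    (hN : IsUnit N.det) (u v : m → α) (h : 1 + v ⬝ᵥ N⁻¹ *ᵥ u ≠ 0) :
    (N + vecMulVec u v)⁻¹ =
      N⁻¹ - (1 + v ⬝ᵥ N⁻¹ *ᵥ u)⁻¹ • vecMulVec (N⁻¹ *ᵥ u) (v ᵥ* N⁻¹) := by
  set c := 1 + v ⬝ᵥ N⁻¹ *ᵥ u
  refine inv_eq_right_inv ?_
  have hNN : N * N⁻¹ = 1 := mul_nonsing_inv N hN
  rw [add_mul, mul_sub, mul_sub, Matrix.mul_smul, Matrix.mul_smul, hNN, mul_vecMulVec,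
    mulVec_mulVec, hNN, one_mulVec, vecMulVec_mul, vecMulVec_mul_vecMulVec, vecMulVec_smul,
    smul_smul, show v ⬝ᵥ N⁻¹ *ᵥ u = c - 1 by simp [c],
    show c⁻¹ * (c - 1) = 1 - c⁻¹ by field_simp, sub_smul, one_smul]
  abel

theorem trace_inv_sub_vecMulVec_self {α : Type*} [Field α] [DecidableEq m] {N : Matrix m m α}
    (hN : IsUnit N.det) (u : m → α) (h : u ⬝ᵥ N⁻¹ *ᵥ u ≠ 1) :
    trace (N - vecMulVec u u)⁻¹ =
      trace N⁻¹ + (1 - u ⬝ᵥ N⁻¹ *ᵥ u)⁻¹ * (u ⬝ᵥ (N⁻¹ ^ 2) *ᵥ u) := by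
  have hc : 1 + u ⬝ᵥ N⁻¹ *ᵥ -u ≠ 0 := by
    rwa [mulVec_neg, dotProduct_neg, ← sub_eq_add_neg, sub_ne_zero, ne_comm]
  rw [sub_eq_add_neg, ← neg_vecMulVec, inv_add_vecMulVec hN _ _ hc, trace_sub, trace_smul,
    trace_vecMulVec, smul_eq_mul, mulVec_neg, dotProduct_neg, ← sub_eq_add_neg, neg_dotProduct,
    dotProduct_comm (N⁻¹ *ᵥ u), ← dotProduct_mulVec, mulVec_mulVec, sq]
  ring

theorem dotProduct_mulVec_self_eq_trace {α : Type*} [CommSemiring α] (A : Matrix m m α)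
    (u : m → α) : u ⬝ᵥ A *ᵥ u = trace (A * vecMulVec u u) := by
  rw [mul_vecMulVec, trace_vecMulVec, dotProduct_comm]

theorem dotProduct_inv_add_vecMulVec_self_lt_one [DecidableEq m] {M : Matrix m m ℝ}
    (hM : M.PosDef) (u : m → ℝ) : u ⬝ᵥ (M + vecMulVec u u)⁻¹ *ᵥ u < 1 := by
  set N := M + vecMulVec u u
  have hN : N.PosDef := hM.add_posSemidef (by simpa using posSemidef_vecMulVec_self_star u)
  set x := N⁻¹ *ᵥ u
  have hNx : N *ᵥ x = u := by
    rw [mulVec_mulVec, mul_nonsing_inv _ ((isUnit_iff_isUnit_det _).1 hN.isUnit), one_mulVec]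
  by_cases hx : x = 0
  · have hu : u = 0 := by rw [← hNx, hx, mulVec_zero]
    simp [hu]
  · have hMx : x ⬝ᵥ M *ᵥ x = u ⬝ᵥ x - (u ⬝ᵥ x) ^ 2 := by
      rw [show M = N - vecMulVec u u by simp [N], sub_mulVec, dotProduct_sub, hNx,
        vecMulVec_mulVec, dotProduct_smul, dotProduct_comm x u]
      simp [sq]
    have := hM.dotProduct_mulVec_pos hx
    simp only [star_trivial, hMx] at this
    nlinarith

end Matrix

section InformationMatrix

variable {d n : ℕ} (a : Fin n → Fin d → ℝ) {lam : ℝ}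

theorem infoM_eq_erase_add {S : Finset (Fin n)} {i : Fin n} (hi : i ∈ S) :
    infoM d n a lam S = infoM d n a lam (S.erase i) + vecMulVec (a i) (a i) := by
  rw [infoM, infoM, ← sum_erase_add S _ hi]
  abel

theorem sum_vecMulVec_eq_infoM_sub (lam : ℝ) (S : Finset (Fin n)) :
    ∑ i ∈ S, vecMulVec (a i) (a i) = infoM d n a lam S - lam • 1 := by
  rw [infoM, add_sub_cancel_right]

theorem posDef_infoM (hlam : 0 < lam) (S : Finset (Fin n)) : (infoM d n a lam S).PosDef :=
  PosDef.posSemidef_add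
    (posSemidef_sum S fun i _ ↦ by simpa using posSemidef_vecMulVec_self_star (a i))
    (PosDef.one.smul hlam)

theorem isUnit_det_infoM (hlam : 0 < lam) (S : Finset (Fin n)) :
    IsUnit (infoM d n a lam S).det :=
  (isUnit_iff_isUnit_det _).1 (posDef_infoM a hlam S).isUnit

theorem leverage_lt_one (hlam : 0 < lam) {S : Finset (Fin n)} {i : Fin n} (hi : i ∈ S) :
    a i ⬝ᵥ (infoM d n a lam S)⁻¹ *ᵥ a i < 1 := by
  rw [infoM_eq_erase_add a hi]
  exact dotProduct_inv_add_vecMulVec_self_lt_one (posDef_infoM a hlam _) (a i)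

theorem fS_erase (hlam : 0 < lam) {S : Finset (Fin n)} {i : Fin n} (hi : i ∈ S) :
    fS d n a lam (S.erase i) = fS d n a lam S +
      (1 - a i ⬝ᵥ (infoM d n a lam S)⁻¹ *ᵥ a i)⁻¹ *
        (a i ⬝ᵥ ((infoM d n a lam S)⁻¹ ^ 2) *ᵥ a i) := by
  rw [fS, fS, ← trace_inv_sub_vecMulVec_self (isUnit_det_infoM a hlam S) _
    (leverage_lt_one a hlam hi).ne, infoM_eq_erase_add a hi, add_sub_cancel_right]

theorem sum_dotProduct_mulVec_eq (lam : ℝ) (A : Matrix (Fin d) (Fin d) ℝ) (S : Finset (Fin n)) :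
    ∑ i ∈ S, a i ⬝ᵥ A *ᵥ a i = trace (A * infoM d n a lam S) - lam * trace A := by
  simp_rw [dotProduct_mulVec_self_eq_trace, ← trace_sum, ← mul_sum,
    sum_vecMulVec_eq_infoM_sub a lam, mul_sub, Matrix.mul_smul, mul_one, trace_sub, trace_smul,
    smul_eq_mul]

theorem sum_leverage (hlam : 0 < lam) (S : Finset (Fin n)) :
    ∑ i ∈ S, a i ⬝ᵥ (infoM d n a lam S)⁻¹ *ᵥ a i = d - lam * fS d n a lam S := by
  rw [sum_dotProduct_mulVec_eq a lam, nonsing_inv_mul _ (isUnit_det_infoM a hlam S), trace_one,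
    Fintype.card_fin, fS]

theorem sum_dotProduct_inv_sq_mulVec_le (hlam : 0 < lam) (S : Finset (Fin n)) :
    ∑ i ∈ S, a i ⬝ᵥ ((infoM d n a lam S)⁻¹ ^ 2) *ᵥ a i ≤ fS d n a lam S := by
  rw [sum_dotProduct_mulVec_eq a lam, sq, mul_assoc,
    nonsing_inv_mul _ (isUnit_det_infoM a hlam S), mul_one, fS, sub_le_self_iff]
  exact mul_nonneg hlam.le
    (by simpa [sq] using ((posDef_infoM a hlam S).inv.posSemidef.pow 2).trace_nonneg)

theorem fS_antitone (hlam : 0 < lam) : Antitone (fS d n a lam) := by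
  refine Finset.antitone_iff_forall_insert_le.2 fun S i hi ↦ ?_
  have h := fS_erase a hlam (mem_insert_self i S)
  rw [erase_insert hi] at h
  have hlev := leverage_lt_one a hlam (mem_insert_self i S)
  have hr :=
    ((posDef_infoM a hlam (insert i S)).inv.posSemidef.pow 2).dotProduct_mulVec_nonneg (a i)
  rw [star_trivial] at hr
  rw [h, le_add_iff_nonneg_right]
  exact mul_nonneg (inv_nonneg.2 (sub_nonneg.2 hlev.le)) hr

theorem card_sub_mul_fS_erase_le (hlam : 0 < lam) {S : Finset (Fin n)} {i : Fin n}
    (hmin : ∀ j ∈ S, fS d n a lam (S.erase i) ≤ fS d n a lam (S.erase j)) :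
    ((#S : ℝ) - d) * fS d n a lam (S.erase i) ≤ ((#S : ℝ) - d + 1) * fS d n a lam S := by
  set N := infoM d n a lam S
  set f := fS d n a lam S
  set g := fS d n a lam (S.erase i) - f
  have hkey : ∀ j ∈ S, g * (1 - a j ⬝ᵥ N⁻¹ *ᵥ a j) ≤ a j ⬝ᵥ (N⁻¹ ^ 2) *ᵥ a j := by
    intro j hj
    have hpos : 0 < 1 - a j ⬝ᵥ N⁻¹ *ᵥ a j := sub_pos.2 (leverage_lt_one a hlam hj)
    have hle := hmin j hj
    rw [fS_erase a hlam hj] at hle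
    rw [← le_div_iff₀ hpos, div_eq_inv_mul]
    linarith
  have hsum : g * (#S - d + lam * f) ≤ f := calc
    g * (#S - d + lam * f) = ∑ j ∈ S, g * (1 - a j ⬝ᵥ N⁻¹ *ᵥ a j) := by
      rw [← mul_sum, sum_sub_distrib, sum_leverage a hlam, sum_const, nsmul_one]
      ring
    _ ≤ ∑ j ∈ S, a j ⬝ᵥ (N⁻¹ ^ 2) *ᵥ a j := sum_le_sum hkey
    _ ≤ f := sum_dotProduct_inv_sq_mulVec_le a hlam S
  have hg : 0 ≤ g := sub_nonneg.2 (fS_antitone a hlam (erase_subset i S))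
  have hf : 0 ≤ f := (posDef_infoM a hlam S).inv.posSemidef.trace_nonneg
  nlinarith [mul_nonneg hg (mul_nonneg hlam.le hf)]

theorem fS_univ_le_zk (hlam : 0 < lam) {k : ℕ} (hkn : k ≤ n) :
    fS d n a lam univ ≤ zk d n a lam k := by
  refine le_csInf ?_ ?_
  · obtain ⟨S, -, hS⟩ := exists_subset_card_eq (s := (univ : Finset (Fin n))) (by simpa using hkn)
    exact ⟨_, S, hS, rfl⟩
  · rintro _ ⟨S, -, rfl⟩
    exact fS_antitone a hlam (subset_univ S)

theorem mul_fS_le_of_backward_greedy (hlam : 0 < lam) {k : ℕ} (hkn : k ≤ n)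
    (T : ℕ → Finset (Fin n)) (hcard : ∀ j, k ≤ j → j ≤ n → #(T j) = j)
    (hstep : ∀ j, k < j → j ≤ n → ∃ i ∈ T j,
      (∀ i' ∈ T j, fS d n a lam ((T j).erase i) ≤ fS d n a lam ((T j).erase i')) ∧
      T (j - 1) = (T j).erase i) :
    ((k : ℝ) - d + 1) * fS d n a lam (T k) ≤ ((n : ℝ) - d + 1) * fS d n a lam (T n) := by
  have hmono : MonotoneOn (fun j : ℕ ↦ ((j : ℝ) - d + 1) * fS d n a lam (T j)) (Set.Icc k n) := by
    refine monotoneOn_of_le_add_one Set.ordConnected_Icc fun j _ hj hj1 ↦ ?_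
    obtain ⟨i, -, hmin, hprev⟩ := hstep (j + 1) (Nat.lt_succ_of_le hj.1) hj1.2
    have hgreedy := card_sub_mul_fS_erase_le a hlam hmin
    rw [Nat.add_sub_cancel] at hprev
    rw [hcard (j + 1) hj1.1 hj1.2, ← hprev] at hgreedy
    push_cast at hgreedy ⊢
    linarith
  exact hmono ⟨le_rfl, hkn⟩ ⟨hkn, le_rfl⟩ hkn

end InformationMatrix

theorem stmt19_general (d n : ℕ)
    (a : Fin n → Fin d → ℝ) (lam : ℝ) (hlam : 0 < lam)
    (k : ℕ) (hdk : d ≤ k) (hkn : k ≤ n)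
    (T : ℕ → Finset (Fin n)) (hTn : T n = Finset.univ)
    (hcard : ∀ j, k ≤ j → j ≤ n → (T j).card = j)
    (hstep : ∀ j, k < j → j ≤ n → ∃ i ∈ T j,
      (∀ i' ∈ T j, fS d n a lam ((T j).erase i) ≤ fS d n a lam ((T j).erase i')) ∧
      T (j - 1) = (T j).erase i) :
    fS d n a lam (T k) ≤ (((n : ℝ) - d + 1) / ((k : ℝ) - d + 1)) * zk d n a lam k := by
  have hdk' : (d : ℝ) ≤ k := by exact_mod_cast hdk
  have hkn' : (k : ℝ) ≤ n := by exact_mod_cast hkn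
  have hk : (0 : ℝ) < k - d + 1 := by linarith
  have hchain := mul_fS_le_of_backward_greedy a hlam hkn T hcard hstep
  rw [hTn] at hchain
  calc fS d n a lam (T k) ≤ ((n - d + 1) / (k - d + 1)) * fS d n a lam univ := by
        rwa [div_mul_eq_mul_div, le_div_iff₀ hk, mul_comm]
    _ ≤ _ := mul_le_mul_of_nonneg_left (fS_univ_le_zk a hlam hkn) (div_nonneg (by linarith) hk.le)

theorem stmt19 (d n : ℕ) (hd : 1 ≤ d) (hdn : d ≤ n)
    (a : Fin n → Fin d → ℝ) (lam : ℝ) (hlam : 0 < lam)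
    (k : ℕ) (hdk : d ≤ k) (hkn : k ≤ n)
    (T : ℕ → Finset (Fin n)) (hTn : T n = Finset.univ)
    (hcard : ∀ j, k ≤ j → j ≤ n → (T j).card = j)
    (hstep : ∀ j, k < j → j ≤ n → ∃ i ∈ T j,
      (∀ i' ∈ T j, fS d n a lam ((T j).erase i) ≤ fS d n a lam ((T j).erase i')) ∧
      T (j - 1) = (T j).erase i) :
    fS d n a lam (T k) ≤ (((n : ℝ) - d + 1) / ((k : ℝ) - d + 1)) * zk d n a lam k :=
  stmt19_general d n a lam hlam k hdk hkn T hTn hcard hstep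
end
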